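/- arXiv:1111.1816 — 4 statements merged into one kernel-verified Lean document; each statement's English description precedes it below -/
import Mathlib

section
/- Let $\alpha > 0$, $p_0 \in \mathbb{N}$, and for each $p \geq p_0$ let $c_p \in [0,\infty)$. Let $(Z_n)_{n \in \mathbb{N}}$ be a sequence of real random variables on a probability space such that $(\mathbf{E}|Z_n|^p)^{1/p} \leq c_p \cdot n^{-\alpha}$ for all $p \geq p_0$ and all $n \in \mathbb{N}$. Then for every $\varepsilon > 0$ there exists a nonnegative random variable $\eta_\varepsilon$ with $\mathbf{E}|\eta_\varepsilon|^p < \infty$ for all $p \geq 1$, such that $|Z_n| \leq \eta_\varepsilon \cdot n^{-\alpha+\varepsilon}$ almost surely for all $n \in \mathbb{N}$. -/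
open MeasureTheory Filter
open scoped ENNReal

/-- **Pathwise convergence rates from `L^p` rates** (Borel–Cantelli type lemma).
If `(E|Z_n|^p)^{1/p} ≤ c_p n^{-α}` for all `p ≥ p₀`, then for every `ε > 0` there is a
nonnegative random variable `η_ε` with all moments finite such that
`|Z_n| ≤ η_ε n^{-α+ε}` almost surely, for all `n`. -/
theorem stmt0 {Ω : Type*} [MeasurableSpace Ω] (P : Measure Ω) [IsProbabilityMeasure P]
    (α : ℝ) (hα : 0 < α) (p₀ : ℕ) (c : ℕ → ℝ) (hc : ∀ p, 0 ≤ c p)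
    (Z : ℕ → Ω → ℝ) (hZm : ∀ n, Measurable (Z n))
    (hZint : ∀ p : ℕ, p₀ ≤ p → ∀ n : ℕ, Integrable (fun ω => |Z n ω| ^ p) P)
    (hbound : ∀ p : ℕ, p₀ ≤ p → ∀ n : ℕ, 1 ≤ n →
      (∫ ω, |Z n ω| ^ p ∂P) ^ ((p : ℝ)⁻¹) ≤ c p * (n : ℝ) ^ (-α)) :
    ∀ ε > (0 : ℝ), ∃ η : Ω → ℝ, (∀ ω, 0 ≤ η ω) ∧
      (∀ p : ℕ, 1 ≤ p → Integrable (fun ω => η ω ^ p) P) ∧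
      ∀ᵐ ω ∂P, ∀ n : ℕ, 1 ≤ n → |Z n ω| ≤ η ω * (n : ℝ) ^ (-α + ε) := by
  intro ε hε
  set β : ℝ := α - ε with hβdef
  set g : ℕ → Ω → ℝ := fun m ω => |Z (m+1) ω| * ((m+1 : ℕ) : ℝ) ^ β with hgdef
  have hgnn : ∀ m ω, 0 ≤ g m ω := fun m ω =>
    mul_nonneg (abs_nonneg _) (Real.rpow_nonneg (by positivity) _)
  set a : ℕ → Ω → ℝ≥0∞ := fun m ω => ENNReal.ofReal (g m ω) with hadef
  have hgm : ∀ m, Measurable (g m) := fun m => ((hZm (m+1)).abs).mul_const _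
  have hameas : ∀ m, Measurable (a m) := fun m => (hgm m).ennreal_ofReal
  set T : Ω → ℝ≥0∞ := fun ω => ⨆ m, a m ω with hTdef
  have hTmeas : Measurable T := Measurable.iSup hameas
  -- real integral bound
  have hreal : ∀ p : ℕ, p₀ ≤ p → 1 ≤ p → ∀ m : ℕ,
      (∫ ω, g m ω ^ p ∂P) ≤ c p ^ p * ((m+1 : ℕ) : ℝ) ^ (-(ε * p)) := by
    intro p hp₀ hp1 m
    set N : ℝ := ((m+1 : ℕ) : ℝ) with hN
    have hNpos : (0 : ℝ) < N := by positivity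
    have hpne : (p : ℝ) ≠ 0 := by positivity
    have hInn : 0 ≤ ∫ ω, |Z (m+1) ω| ^ p ∂P :=
      integral_nonneg fun ω => by positivity
    have hI : (∫ ω, |Z (m+1) ω| ^ p ∂P) ≤ (c p * N ^ (-α)) ^ p := by
      have h1 := hbound p hp₀ (m+1) (Nat.le_add_left 1 m)
      calc (∫ ω, |Z (m+1) ω| ^ p ∂P)
          = (((∫ ω, |Z (m+1) ω| ^ p ∂P) ^ ((p:ℝ)⁻¹)) ^ (p:ℕ)) := by
            rw [← Real.rpow_natCast (_ ^ ((p:ℝ)⁻¹)) p, ← Real.rpow_mul hInn,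
              inv_mul_cancel₀ hpne, Real.rpow_one]
        _ ≤ (c p * N ^ (-α)) ^ p :=
            pow_le_pow_left₀ (Real.rpow_nonneg hInn _) h1 p
    have hg : (fun ω => g m ω ^ p) = fun ω => |Z (m+1) ω| ^ p * (N ^ β) ^ p := by
      funext ω; rw [hgdef]; ring
    rw [hg, integral_mul_const]
    have hb : 0 ≤ (N ^ β) ^ p := by positivity
    calc (∫ ω, |Z (m+1) ω| ^ p ∂P) * (N ^ β) ^ p
        ≤ (c p * N ^ (-α)) ^ p * (N ^ β) ^ p := by
          exact mul_le_mul_of_nonneg_right hI hb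
      _ = c p ^ p * ((N ^ (-α)) ^ p * (N ^ β) ^ p) := by ring
      _ = c p ^ p * N ^ (-(ε * p)) := by
          rw [← Real.rpow_natCast (N ^ (-α)) p, ← Real.rpow_natCast (N ^ β) p,
            ← Real.rpow_mul hNpos.le, ← Real.rpow_mul hNpos.le,
            ← Real.rpow_add hNpos]
          congr 1
          rw [hβdef]; ring
  -- integrability of g^p
  have hgint : ∀ p : ℕ, p₀ ≤ p → ∀ m : ℕ, Integrable (fun ω => g m ω ^ p) P := by
    intro p hp m
    have : (fun ω => g m ω ^ p) = fun ω => |Z (m+1) ω| ^ p * (((m+1:ℕ):ℝ) ^ β) ^ p := by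
      funext ω; rw [hgdef]; ring
    rw [this]
    exact (hZint p hp (m+1)).mul_const _
  -- the big exponent
  set P₁ : ℕ := max (max p₀ 1) (⌈ε⁻¹⌉₊ + 1) with hP₁
  -- key finiteness
  have key : ∀ p : ℕ, P₁ ≤ p → ∫⁻ ω, T ω ^ (p:ℝ) ∂P < ∞ := by
    intro p hp
    have hp₀ : p₀ ≤ p := le_trans (le_trans (le_max_left _ _) (le_max_left _ _)) hp
    have hp1 : 1 ≤ p := le_trans (le_trans (le_max_right _ _) (le_max_left _ _)) hp
    have hppos : (0:ℝ) < p := by exact_mod_cast hp1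
    have hεp : 1 < ε * p := by
      have h1 : (⌈ε⁻¹⌉₊ + 1 : ℕ) ≤ p := le_trans (le_max_right _ _) hp
      have h2 : ε⁻¹ < ((⌈ε⁻¹⌉₊ : ℝ) + 1) := lt_of_le_of_lt (Nat.le_ceil _) (by linarith)
      have h3 : ε⁻¹ < (p : ℝ) := lt_of_lt_of_le h2 (by exact_mod_cast h1)
      have := (inv_lt_iff_one_lt_mul₀ hε).mp h3
      linarith [mul_comm ε (p:ℝ)]
    -- pointwise bound T^p ≤ ∑' a^p
    have hTp : ∀ ω, T ω ^ (p:ℝ) ≤ ∑' m, a m ω ^ (p:ℝ) := by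
      intro ω
      have hTle : T ω ≤ (∑' m, a m ω ^ (p:ℝ)) ^ ((p:ℝ)⁻¹) := by
        refine iSup_le fun m => ?_
        calc a m ω = (a m ω ^ (p:ℝ)) ^ ((p:ℝ)⁻¹) := by
              rw [← ENNReal.rpow_mul, mul_inv_cancel₀ (by positivity : (p:ℝ) ≠ 0),
                ENNReal.rpow_one]
          _ ≤ (∑' m, a m ω ^ (p:ℝ)) ^ ((p:ℝ)⁻¹) :=
              ENNReal.rpow_le_rpow (ENNReal.le_tsum m) (by positivity)
      calc T ω ^ (p:ℝ) ≤ ((∑' m, a m ω ^ (p:ℝ)) ^ ((p:ℝ)⁻¹)) ^ (p:ℝ) :=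
            ENNReal.rpow_le_rpow hTle hppos.le
        _ = ∑' m, a m ω ^ (p:ℝ) := by
            rw [← ENNReal.rpow_mul, inv_mul_cancel₀ (by positivity : (p:ℝ) ≠ 0),
              ENNReal.rpow_one]
    have hae : ∀ m ω, a m ω ^ (p:ℝ) = ENNReal.ofReal (g m ω ^ p) := by
      intro m ω
      show ENNReal.ofReal (g m ω) ^ ((p:ℕ):ℝ) = ENNReal.ofReal (g m ω ^ p)
      rw [← Real.rpow_natCast (g m ω) p, ← ENNReal.ofReal_rpow_of_nonneg (hgnn m ω) hppos.le]
    calc ∫⁻ ω, T ω ^ (p:ℝ) ∂P ≤ ∫⁻ ω, ∑' m, a m ω ^ (p:ℝ) ∂P :=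
          lintegral_mono hTp
      _ = ∑' m, ∫⁻ ω, a m ω ^ (p:ℝ) ∂P := by
          refine lintegral_tsum fun m => ?_
          simp only [hae]
          exact ((hgm m).pow_const p).ennreal_ofReal.aemeasurable
      _ ≤ ∑' m, ENNReal.ofReal (c p ^ p * ((m+1 : ℕ) : ℝ) ^ (-(ε * p))) := by
          refine ENNReal.tsum_le_tsum fun m => ?_
          simp only [hae]
          rw [← ofReal_integral_eq_lintegral_ofReal (hgint p hp₀ m)
            (Filter.Eventually.of_forall fun ω => by positivity)]
          exact ENNReal.ofReal_le_ofReal (hreal p hp₀ hp1 m)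
      _ < ∞ := by
          have hsum : Summable (fun m : ℕ => c p ^ p * ((m+1 : ℕ) : ℝ) ^ (-(ε * p))) := by
            refine Summable.mul_left _ ?_
            have : Summable (fun n : ℕ => (n : ℝ) ^ (-(ε * p))) :=
              Real.summable_nat_rpow.mpr (by linarith)
            have h := (summable_nat_add_iff 1).mpr this
            simpa using h
          rw [← ENNReal.ofReal_tsum_of_nonneg (fun m => mul_nonneg (pow_nonneg (hc p) p) (Real.rpow_nonneg (by positivity) _)) hsum]
          exact ENNReal.ofReal_lt_top
  -- a.e. finiteness of T
  have hP₁1 : 1 ≤ P₁ := le_trans (le_max_right _ _) (le_max_left _ _)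
  have hfin : ∀ᵐ ω ∂P, T ω < ∞ := by
    have h1 : ∀ᵐ ω ∂P, T ω ^ ((P₁:ℕ):ℝ) < ∞ := by
      refine ae_lt_top ?_ (key P₁ le_rfl).ne
      exact hTmeas.pow_const _ |>.mono le_rfl le_rfl
    filter_upwards [h1] with ω hω
    by_contra h
    rw [not_lt, top_le_iff] at h
    rw [h, ENNReal.top_rpow_of_pos (by exact_mod_cast hP₁1)] at hω
    exact absurd hω (lt_irrefl _)
  set η : Ω → ℝ := fun ω => (T ω).toReal with hηdef
  have hηmeas : Measurable η := hTmeas.ennreal_toReal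
  refine ⟨η, fun ω => ENNReal.toReal_nonneg, ?_, ?_⟩
  · -- integrability of all moments
    intro p hp
    set q : ℕ := max p P₁ with hq
    have hηq : Integrable (fun ω => η ω ^ q) P := by
      refine ⟨(hηmeas.pow_const q).aestronglyMeasurable, ?_⟩
      rw [hasFiniteIntegral_iff_ofReal (Filter.Eventually.of_forall fun ω => by positivity)]
      calc ∫⁻ ω, ENNReal.ofReal (η ω ^ q) ∂P ≤ ∫⁻ ω, T ω ^ ((q:ℕ):ℝ) ∂P := by
            refine lintegral_mono fun ω => ?_
            rw [ENNReal.ofReal_pow ENNReal.toReal_nonneg, ENNReal.rpow_natCast]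
            exact pow_le_pow_left' ENNReal.ofReal_toReal_le q
        _ < ∞ := key q (le_max_right _ _)
    have hbnd : ∀ ω, η ω ^ p ≤ 1 + η ω ^ q := by
      intro ω
      rcases le_or_gt (η ω) 1 with h | h
      · have h1 : η ω ^ p ≤ 1 := pow_le_one₀ ENNReal.toReal_nonneg h
        have h2 : (0:ℝ) ≤ η ω ^ q := by positivity
        linarith
      · have : η ω ^ p ≤ η ω ^ q := pow_le_pow_right₀ h.le (le_max_left _ _)
        linarith
    refine Integrable.mono ((integrable_const (1:ℝ)).add hηq)
      (hηmeas.pow_const p).aestronglyMeasurable ?_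
    refine Filter.Eventually.of_forall fun ω => ?_
    simp only [Real.norm_eq_abs, Pi.add_apply]
    rw [abs_of_nonneg (by positivity : (0:ℝ) ≤ η ω ^ p)]
    exact le_trans (hbnd ω) (le_abs_self _)
  · -- a.e. bound
    filter_upwards [hfin] with ω hω
    intro n hn
    obtain ⟨m, rfl⟩ : ∃ m, n = m + 1 := ⟨n - 1, (Nat.succ_pred_eq_of_pos hn).symm⟩
    have h1 : a m ω ≤ T ω := le_iSup (fun m => a m ω) m
    have h2 : g m ω ≤ η ω := by
      have := ENNReal.toReal_mono hω.ne h1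
      rwa [hadef, ENNReal.toReal_ofReal (hgnn m ω)] at this
    have hNpos : (0:ℝ) < ((m+1:ℕ):ℝ) := by positivity
    have hNb : (0:ℝ) < ((m+1:ℕ):ℝ) ^ β := Real.rpow_pos_of_pos hNpos β
    have hexp : -α + ε = -β := by rw [hβdef]; ring
    rw [hexp, Real.rpow_neg hNpos.le, ← div_eq_mul_inv]
    rw [le_div_iff₀ hNb]
    exact h2
end

section
/- Let $\beta$ be a one-dimensional fractional Brownian motion with Hurst parameter $H \in (0, 3/4)$. Then there is a constant $c_H > 0$ such that for all $n \geq 1$, $\mathbf{E}\big| \frac{1}{n} \sum_{k=0}^{n-1} (|\beta_{k+1} - \beta_k|^2 - 1) \big|^2 \leq c_H / n$. -/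
/-!
Write `X k = β (k + 1) - β k`. These increments are jointly centred Gaussian with unit variance
and covariance `E[X k * X m] = ρ (k - m)`, where `ρ = fgnCov H` is a second difference of
`|x| ^ (2H)`. For a jointly centred Gaussian pair, polarising `E Z⁴ = 3 (E Z²)²` over
`Z = X ± Y` gives `E[X² Y²] = E X² E Y² + 2 (E[X Y])²`, so
`E (∑_{k<n} (X k² - 1))² = 2 ∑_{k,m<n} ρ (k - m)²`.
By the mean value theorem `|ρ d| ≲ d ^ (2H - 2)`, so `ρ²` is summable over `ℤ` exactly when
`H < 3/4`; each row of the double sum is then at most `∑_{j ∈ ℤ} ρ j²`, whence the bound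
`2 ∑_{j ∈ ℤ} ρ j² / n`.
-/

open MeasureTheory ProbabilityTheory Filter

/-- A process `β : ℝ → Ω → ℝ` is a (one-dimensional) fractional Brownian motion with Hurst
parameter `H` under `P` if it is a centered Gaussian process (every finite linear combination
of its values is a centered Gaussian random variable) with covariance
`E(β_s β_t) = (|s|^{2H} + |t|^{2H} - |s-t|^{2H})/2`. -/
def IsFBM {Ω : Type*} [MeasurableSpace Ω] (P : Measure Ω) (H : ℝ) (β : ℝ → Ω → ℝ) : Prop :=
  (∀ t, Measurable (β t)) ∧
  (∀ (n : ℕ) (c : Fin n → ℝ) (t : Fin n → ℝ), ∃ v : NNReal,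
    P.map (fun ω => ∑ i, c i * β (t i) ω) = gaussianReal 0 v) ∧
  (∀ s t : ℝ, ∫ ω, β s ω * β t ω ∂P =
    (|s| ^ (2 * H) + |t| ^ (2 * H) - |s - t| ^ (2 * H)) / 2)

open scoped NNReal

lemma integral_sq_gaussianReal (v : ℝ≥0) : ∫ x, x ^ 2 ∂gaussianReal 0 v = v := by
  simpa [variance_eq_integral measurable_id'.aemeasurable] using
    variance_fun_id_gaussianReal (μ := 0) (v := v)

lemma integral_pow_four_gaussianReal (v : ℝ≥0) :
    ∫ x, x ^ 4 ∂gaussianReal 0 v = 3 * (v : ℝ) ^ 2 := by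
  set E : ℝ → ℝ := fun t => Real.exp (v * t ^ 2 / 2)
  have hE (t : ℝ) : HasDerivAt E (v * t * E t) t := by
    convert (((hasDerivAt_pow 2 t).const_mul (v : ℝ)).div_const 2).exp using 1
    simp only [E]; push_cast; ring
  have deriv_mul_E {p p' : ℝ → ℝ} (hp : ∀ t, HasDerivAt p (p' t) t) :
      deriv (fun t => p t * E t) = fun t => (p' t + v * t * p t) * E t :=
    funext fun t => ((hp t).mul (hE t)).deriv.trans (by ring)
  have d1 : deriv E = fun t => v * t * E t := funext fun t => (hE t).deriv
  have d2 : deriv (fun t => v * t * E t) = fun t => (v + v ^ 2 * t ^ 2) * E t := by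
    rw [deriv_mul_E (p := fun t => v * t) fun t => (hasDerivAt_id' t).const_mul (v : ℝ)]
    ext t; ring
  have d3 : deriv (fun t => (v + v ^ 2 * t ^ 2) * E t)
      = fun t => (3 * v ^ 2 * t + v ^ 3 * t ^ 3) * E t := by
    rw [deriv_mul_E fun t => ((hasDerivAt_pow 2 t).const_mul ((v : ℝ) ^ 2)).const_add (v : ℝ)]
    ext t; push_cast; ring
  have d4 : deriv (fun t => (3 * v ^ 2 * t + v ^ 3 * t ^ 3) * E t) 0 = 3 * (v : ℝ) ^ 2 := by
    rw [deriv_mul_E (p := fun t => 3 * v ^ 2 * t + v ^ 3 * t ^ 3) fun t =>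
      ((hasDerivAt_id' t).const_mul (3 * (v : ℝ) ^ 2)).add
        ((hasDerivAt_pow 3 t).const_mul ((v : ℝ) ^ 3))]
    simp [E]
  have h := iteratedDeriv_mgf_zero (X := fun x : ℝ => x) (μ := gaussianReal 0 v) (by simp) 4
  simp only [mgf_fun_id_gaussianReal, zero_mul, zero_add, Pi.pow_apply] at h
  rw [← h, iteratedDeriv_succ, iteratedDeriv_succ', iteratedDeriv_succ', iteratedDeriv_one,
    d1, d2, d3, d4]

section GaussianLaw

variable {Ω : Type*} [MeasurableSpace Ω] {P : Measure Ω} {Z : Ω → ℝ} {μ : ℝ} {v : ℝ≥0}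

lemma hasLaw_of_map_eq_gaussianReal (h : P.map Z = gaussianReal μ v) :
    HasLaw Z (gaussianReal μ v) P where
  aemeasurable := by
    by_contra hZ
    rw [Measure.map_of_not_aemeasurable hZ] at h
    exact IsProbabilityMeasure.ne_zero _ h.symm
  map_eq := h

lemma ProbabilityTheory.HasLaw.integrable_pow_of_gaussianReal
    (hZ : HasLaw Z (gaussianReal μ v) P) (n : ℕ) : Integrable (fun ω => Z ω ^ n) P := by
  have := hZ.isProbabilityMeasure
  refine (integrable_norm_iff (hZ.aemeasurable.pow_const n).aestronglyMeasurable).1 ?_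
  simpa only [norm_pow] using
    (hZ.hasGaussianLaw.memLp (p := n) (ENNReal.natCast_ne_top n)).integrable_norm_pow'

lemma ProbabilityTheory.HasLaw.integral_pow_four_of_gaussianReal
    (hZ : HasLaw Z (gaussianReal 0 v) P) : ∫ ω, Z ω ^ 4 ∂P = 3 * (∫ ω, Z ω ^ 2 ∂P) ^ 2 := by
  have h4 := hZ.integral_comp (f := fun x => x ^ 4) (by fun_prop)
  have h2 := hZ.integral_comp (f := fun x => x ^ 2) (by fun_prop)
  simp only [Function.comp_def] at h4 h2
  rw [h4, h2, integral_pow_four_gaussianReal, integral_sq_gaussianReal]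

end GaussianLaw

section JointlyGaussian

variable {Ω : Type*} [MeasurableSpace Ω] {P : Measure Ω} {X Y : Ω → ℝ}

lemma integral_sq_mul_sq_of_hasLaw_gaussianReal
    (hXY : ∀ a b : ℝ, ∃ v : ℝ≥0, HasLaw (fun ω => a * X ω + b * Y ω) (gaussianReal 0 v) P) :
    Integrable (fun ω => X ω ^ 2 * Y ω ^ 2) P ∧
      ∫ ω, X ω ^ 2 * Y ω ^ 2 ∂P
        = (∫ ω, X ω ^ 2 ∂P) * (∫ ω, Y ω ^ 2 ∂P) + 2 * (∫ ω, X ω * Y ω ∂P) ^ 2 := by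
  have law (c : ℝ) : ∃ v : ℝ≥0, HasLaw (fun ω => X ω + c * Y ω) (gaussianReal 0 v) P := by
    simpa using hXY 1 c
  obtain ⟨vX, hX⟩ : ∃ v : ℝ≥0, HasLaw X (gaussianReal 0 v) P := by simpa using hXY 1 0
  obtain ⟨vY, hY⟩ : ∃ v : ℝ≥0, HasLaw Y (gaussianReal 0 v) P := by simpa using hXY 0 1
  have := hX.isProbabilityMeasure
  have iX2 := hX.integrable_pow_of_gaussianReal 2
  have iY2 := hY.integrable_pow_of_gaussianReal 2
  have iX4 := hX.integrable_pow_of_gaussianReal 4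
  have iY4 := hY.integrable_pow_of_gaussianReal 4
  have iXY : Integrable (fun ω => X ω * Y ω) P :=
    (hX.hasGaussianLaw.memLp (p := 2) (by simp)).integrable_mul
      (hY.hasGaussianLaw.memLp (p := 2) (by simp))
  have i4 (c : ℝ) : Integrable (fun ω => (X ω + c * Y ω) ^ 4) P := by
    obtain ⟨v, h⟩ := law c
    exact h.integrable_pow_of_gaussianReal 4
  have moment4 (c : ℝ) : ∫ ω, (X ω + c * Y ω) ^ 4 ∂P
      = 3 * (∫ ω, X ω ^ 2 ∂P + 2 * c * ∫ ω, X ω * Y ω ∂P + c ^ 2 * ∫ ω, Y ω ^ 2 ∂P) ^ 2 := by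
    obtain ⟨v, h⟩ := law c
    rw [h.integral_pow_four_of_gaussianReal]
    have : (fun ω => (X ω + c * Y ω) ^ 2)
        = fun ω => X ω ^ 2 + 2 * c * (X ω * Y ω) + c ^ 2 * Y ω ^ 2 := by ext; ring
    rw [this, integral_add (by fun_prop) (by fun_prop), integral_add (by fun_prop) (by fun_prop),
      integral_const_mul, integral_const_mul]
  -- polarization: the odd powers of `Y` in `(X + Y)⁴ + (X - Y)⁴` cancel
  have polar : (fun ω => X ω ^ 2 * Y ω ^ 2) = fun ω =>
      ((X ω + 1 * Y ω) ^ 4 + (X ω + (-1) * Y ω) ^ 4 - 2 * X ω ^ 4 - 2 * Y ω ^ 4) / 12 := by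
    ext; ring
  have i1 := i4 1
  have i2 := i4 (-1)
  refine ⟨polar ▸ by fun_prop, ?_⟩
  rw [polar, integral_div, integral_sub (by fun_prop) (by fun_prop),
    integral_sub (by fun_prop) (by fun_prop), integral_add i1 i2, integral_const_mul,
    integral_const_mul, moment4, moment4, hX.integral_pow_four_of_gaussianReal,
    hY.integral_pow_four_of_gaussianReal]
  ring

end JointlyGaussian

lemma integral_sq_sum_sq_sub_one {Ω ι : Type*} [MeasurableSpace Ω] {P : Measure Ω}
    [IsProbabilityMeasure P] (s : Finset ι) {X : ι → Ω → ℝ}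
    (hX : ∀ i j (a b : ℝ), ∃ v : ℝ≥0,
      HasLaw (fun ω => a * X i ω + b * X j ω) (gaussianReal 0 v) P)
    (hvar : ∀ i, ∫ ω, X i ω ^ 2 ∂P = 1) :
    ∫ ω, (∑ i ∈ s, (X i ω ^ 2 - 1)) ^ 2 ∂P
      = 2 * ∑ i ∈ s, ∑ j ∈ s, (∫ ω, X i ω * X j ω ∂P) ^ 2 := by
  have pair (i j : ι) : Integrable (fun ω => (X i ω ^ 2 - 1) * (X j ω ^ 2 - 1)) P ∧
      ∫ ω, (X i ω ^ 2 - 1) * (X j ω ^ 2 - 1) ∂P = 2 * (∫ ω, X i ω * X j ω ∂P) ^ 2 := by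
    obtain ⟨iProd, hProd⟩ := integral_sq_mul_sq_of_hasLaw_gaussianReal (hX i j)
    obtain ⟨vi, hi⟩ : ∃ v : ℝ≥0, HasLaw (X i) (gaussianReal 0 v) P := by simpa using hX i j 1 0
    obtain ⟨vj, hj⟩ : ∃ v : ℝ≥0, HasLaw (X j) (gaussianReal 0 v) P := by simpa using hX i j 0 1
    have i2 := hi.integrable_pow_of_gaussianReal 2
    have j2 := hj.integrable_pow_of_gaussianReal 2
    have expand : (fun ω => (X i ω ^ 2 - 1) * (X j ω ^ 2 - 1))
        = fun ω => X i ω ^ 2 * X j ω ^ 2 - X i ω ^ 2 - X j ω ^ 2 + 1 := by ext; ring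
    rw [expand]
    refine ⟨by fun_prop, ?_⟩
    rw [integral_add (by fun_prop) (by fun_prop), integral_sub (by fun_prop) (by fun_prop),
      integral_sub (by fun_prop) (by fun_prop), hProd, hvar, hvar]
    simp
  have square (ω : Ω) : (∑ i ∈ s, (X i ω ^ 2 - 1)) ^ 2
      = ∑ i ∈ s, ∑ j ∈ s, (X i ω ^ 2 - 1) * (X j ω ^ 2 - 1) := by
    rw [sq, Finset.sum_mul_sum]
  simp_rw [square]
  rw [integral_finsetSum _ fun i _ => integrable_finsetSum _ fun j _ => (pair i j).1,
    Finset.mul_sum]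
  refine Finset.sum_congr rfl fun i _ => ?_
  rw [integral_finsetSum _ fun j _ => (pair i j).1, Finset.mul_sum]
  exact Finset.sum_congr rfl fun j _ => (pair i j).2

open Set in
lemma abs_sub_two_mul_add_le {f f' f'' : ℝ → ℝ} {x M : ℝ}
    (hf : ∀ y ∈ Icc (x - 1) (x + 1), HasDerivAt f (f' y) y)
    (hf' : ∀ y ∈ Icc (x - 1) (x + 1), HasDerivAt f' (f'' y) y)
    (hM : ∀ y ∈ Icc (x - 1) (x + 1), |f'' y| ≤ M) :
    |f (x + 1) - 2 * f x + f (x - 1)| ≤ 2 * M := by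
  have left : Icc (x - 1) x ⊆ Icc (x - 1) (x + 1) := Icc_subset_Icc le_rfl (by linarith)
  have right : Icc x (x + 1) ⊆ Icc (x - 1) (x + 1) := Icc_subset_Icc (by linarith) le_rfl
  obtain ⟨a, ha, hfa⟩ := exists_hasDerivAt_eq_slope f f' (lt_add_one x)
    (fun y hy => (hf y (right hy)).continuousAt.continuousWithinAt)
    (fun y hy => hf y (right (Ioo_subset_Icc_self hy)))
  obtain ⟨b, hb, hfb⟩ := exists_hasDerivAt_eq_slope f f' (sub_one_lt x)
    (fun y hy => (hf y (left hy)).continuousAt.continuousWithinAt)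
    (fun y hy => hf y (left (Ioo_subset_Icc_self hy)))
  have hf'ab : |f' a - f' b| ≤ M * |a - b| := by
    simpa only [Real.norm_eq_abs] using
      (convex_Icc (x - 1) (x + 1)).norm_image_sub_le_of_norm_hasDerivWithin_le
        (fun y hy => (hf' y hy).hasDerivWithinAt) hM (left (Ioo_subset_Icc_self hb))
        (right (Ioo_subset_Icc_self ha))
  have hab : |a - b| ≤ 2 := abs_le.2 ⟨by linarith [ha.1, hb.2], by linarith [ha.2, hb.1]⟩
  have hM0 : 0 ≤ M := (abs_nonneg _).trans (hM x ⟨by linarith, by linarith⟩)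
  calc |f (x + 1) - 2 * f x + f (x - 1)| = |f' a - f' b| := by
        rw [hfa, hfb]; ring_nf
    _ ≤ M * 2 := hf'ab.trans (mul_le_mul_of_nonneg_left hab hM0)
    _ = 2 * M := mul_comm _ _

-- autocovariance of fractional Gaussian noise, the increment sequence of fBm
noncomputable def fgnCov (H d : ℝ) : ℝ :=
  (|d + 1| ^ (2 * H) + |d - 1| ^ (2 * H) - 2 * |d| ^ (2 * H)) / 2

lemma fgnCov_neg (H d : ℝ) : fgnCov H (-d) = fgnCov H d := by
  rw [fgnCov, fgnCov, abs_neg, ← abs_neg (-d + 1), ← abs_neg (-d - 1)]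
  ring_nf

lemma fgnCov_zero {H : ℝ} (hH : 0 < H) : fgnCov H 0 = 1 := by
  simp [fgnCov, Real.zero_rpow (by positivity : 2 * H ≠ 0)]

lemma abs_fgnCov_le {H d : ℝ} (hH : H ≤ 1) (hd : 1 < d) :
    |fgnCov H d| ≤ |2 * H * (2 * H - 1)| * (d - 1) ^ (2 * H - 2) := by
  have pos : ∀ y ∈ Set.Icc (d - 1) (d + 1), 0 < y := fun y hy => by linarith [hy.1]
  have key := abs_sub_two_mul_add_le (f := fun y => y ^ (2 * H))
    (f' := fun y => 2 * H * y ^ (2 * H - 1))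
    (f'' := fun y => 2 * H * ((2 * H - 1) * y ^ (2 * H - 1 - 1)))
    (M := |2 * H * (2 * H - 1)| * (d - 1) ^ (2 * H - 2))
    (fun y hy => by
      simpa [mul_comm] using Real.hasDerivAt_rpow_const (p := 2 * H) (Or.inl (pos y hy).ne'))
    (fun y hy => (Real.hasDerivAt_rpow_const (Or.inl (pos y hy).ne')).const_mul _)
    (fun y hy => by
      rw [show 2 * H - 1 - 1 = 2 * H - 2 by ring, ← mul_assoc, abs_mul,
        abs_of_nonneg (Real.rpow_nonneg (pos y hy).le _)]
      exact mul_le_mul_of_nonneg_left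
        (Real.rpow_le_rpow_of_nonpos (by linarith) hy.1 (by linarith)) (abs_nonneg _))
  rw [fgnCov, abs_of_pos (by linarith : 0 < d + 1), abs_of_pos (by linarith : 0 < d - 1),
    abs_of_pos (by linarith : 0 < d), abs_div, abs_two, show (d + 1) ^ (2 * H) + (d - 1) ^ (2 * H) - 2 * d ^ (2 * H)
    = (d + 1) ^ (2 * H) - 2 * d ^ (2 * H) + (d - 1) ^ (2 * H) by ring]
  linarith

lemma summable_fgnCov_sq {H : ℝ} (hH : H < 3 / 4) :
    Summable fun j : ℤ => fgnCov H j ^ 2 := by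
  set K := |2 * H * (2 * H - 1)|
  have hnat : Summable fun n : ℕ => fgnCov H n ^ 2 := by
    rw [← summable_nat_add_iff 2]
    have hp : Summable fun n : ℕ => ((n + 1 : ℕ) : ℝ) ^ (4 * H - 4) :=
      (summable_nat_add_iff 1).2 (Real.summable_nat_rpow.2 (by linarith))
    refine (hp.mul_left (K ^ 2)).of_nonneg_of_le (fun _ => sq_nonneg _) fun n => ?_
    have hn : (0 : ℝ) ≤ ((n + 1 : ℕ) : ℝ) := Nat.cast_nonneg _
    have hb := abs_fgnCov_le (d := ((n + 2 : ℕ) : ℝ)) (by linarith) (by push_cast; linarith)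
    rw [show ((n + 2 : ℕ) : ℝ) - 1 = ((n + 1 : ℕ) : ℝ) by push_cast; ring] at hb
    calc fgnCov H ((n + 2 : ℕ) : ℝ) ^ 2 = |fgnCov H ((n + 2 : ℕ) : ℝ)| ^ 2 := (sq_abs _).symm
      _ ≤ (K * ((n + 1 : ℕ) : ℝ) ^ (2 * H - 2)) ^ 2 := pow_le_pow_left₀ (abs_nonneg _) hb 2
      _ = K ^ 2 * ((n + 1 : ℕ) : ℝ) ^ (4 * H - 4) := by
        rw [mul_pow, ← Real.rpow_mul_natCast hn]; ring_nf
  refine Summable.of_nat_of_neg ?_ ?_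
  · simpa using hnat
  · simpa [fgnCov_neg] using hnat

lemma sum_range_comp_sub_le_tsum {f : ℤ → ℝ} (hf : Summable f) (hf0 : 0 ≤ f) (k n : ℕ) :
    ∑ m ∈ Finset.range n, f (k - m) ≤ ∑' j, f j := by
  rw [← Finset.sum_image fun a _ b _ h => by simpa using h]
  exact hf.sum_le_tsum _ fun j _ => hf0 j

namespace IsFBM

variable {Ω : Type*} [MeasurableSpace Ω] {P : Measure Ω} {H : ℝ} {β : ℝ → Ω → ℝ}

lemma hasLaw_eval (hβ : IsFBM P H β) (t : ℝ) :
    ∃ v : ℝ≥0, HasLaw (β t) (gaussianReal 0 v) P := by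
  obtain ⟨v, hv⟩ := hβ.2.1 1 ![1] ![t]
  exact ⟨v, hasLaw_of_map_eq_gaussianReal (by simpa using hv)⟩

lemma hasLaw_increments (hβ : IsFBM P H β) (s t a b : ℝ) :
    ∃ v : ℝ≥0, HasLaw (fun ω => a * (β (s + 1) ω - β s ω) + b * (β (t + 1) ω - β t ω))
      (gaussianReal 0 v) P := by
  obtain ⟨v, hv⟩ := hβ.2.1 4 ![a, -a, b, -b] ![s + 1, s, t + 1, t]
  refine ⟨v, hasLaw_of_map_eq_gaussianReal ?_⟩
  convert hv using 2
  ext ω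
  simp only [Fin.sum_univ_four, Matrix.cons_val]
  ring

lemma integral_increment_mul_increment (hβ : IsFBM P H β) (s t : ℝ) :
    ∫ ω, (β (s + 1) ω - β s ω) * (β (t + 1) ω - β t ω) ∂P = fgnCov H (s - t) := by
  have prod (u w : ℝ) : Integrable (fun ω => β u ω * β w ω) P := by
    obtain ⟨vu, hu⟩ := hβ.hasLaw_eval u
    obtain ⟨vw, hw⟩ := hβ.hasLaw_eval w
    exact (hu.hasGaussianLaw.memLp (p := 2) (by simp)).integrable_mul
      (hw.hasGaussianLaw.memLp (p := 2) (by simp))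
  have i1 := prod (s + 1) (t + 1)
  have i2 := prod (s + 1) t
  have i3 := prod s (t + 1)
  have i4 := prod s t
  have expand : (fun ω => (β (s + 1) ω - β s ω) * (β (t + 1) ω - β t ω)) = fun ω =>
      β (s + 1) ω * β (t + 1) ω - β (s + 1) ω * β t ω
        - (β s ω * β (t + 1) ω - β s ω * β t ω) := by
    ext; ring
  rw [expand, integral_sub (by fun_prop) (by fun_prop), integral_sub i1 i2, integral_sub i3 i4,
    hβ.2.2, hβ.2.2, hβ.2.2, hβ.2.2, fgnCov, show s + 1 - (t + 1) = s - t by ring,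
    show s + 1 - t = s - t + 1 by ring, show s - (t + 1) = s - t - 1 by ring]
  ring

end IsFBM

/-- **Variance bound for quadratic variations of fBm, `H < 3/4`:**
`E | n⁻¹ ∑_{k<n} (|β_{k+1} - β_k|² - 1) |² ≤ c_H / n`. -/
theorem stmt3 {Ω : Type*} [MeasurableSpace Ω] (P : Measure Ω) [IsProbabilityMeasure P]
    (H : ℝ) (hH : H ∈ Set.Ioo (0 : ℝ) (3 / 4)) (β : ℝ → Ω → ℝ) (hβ : IsFBM P H β) :
    ∃ c : ℝ, 0 < c ∧ ∀ n : ℕ, 1 ≤ n →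
      ∫ ω, ((1 / (n : ℝ)) * ∑ k ∈ Finset.range n,
          ((β ((k : ℝ) + 1) ω - β (k : ℝ) ω) ^ 2 - 1)) ^ 2 ∂P ≤ c / n := by
  set X : ℕ → Ω → ℝ := fun k ω => β ((k : ℝ) + 1) ω - β (k : ℝ) ω
  have hcov (k m : ℕ) : ∫ ω, X k ω * X m ω ∂P = fgnCov H ((k - m : ℤ) : ℝ) := by
    push_cast
    exact hβ.integral_increment_mul_increment k m
  have hvar (k : ℕ) : ∫ ω, X k ω ^ 2 ∂P = 1 := by
    simp_rw [sq]
    rw [hcov, sub_self, Int.cast_zero, fgnCov_zero hH.1]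
  have hsum := summable_fgnCov_sq hH.2
  set C := ∑' j : ℤ, fgnCov H j ^ 2
  have hC : 0 < C := hsum.tsum_pos (fun _ => sq_nonneg _) 0 (by simp [fgnCov_zero hH.1])
  refine ⟨2 * C, by positivity, fun n _ => ?_⟩
  have key := integral_sq_sum_sq_sub_one (X := X) (Finset.range n)
    (fun k m => hβ.hasLaw_increments k m) hvar
  calc ∫ ω, ((1 / (n : ℝ)) * ∑ k ∈ Finset.range n, (X k ω ^ 2 - 1)) ^ 2 ∂P
      = (1 / (n : ℝ)) ^ 2 * ∫ ω, (∑ k ∈ Finset.range n, (X k ω ^ 2 - 1)) ^ 2 ∂P := by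
        simp_rw [mul_pow]; exact integral_const_mul _ _
    _ = (1 / (n : ℝ)) ^ 2 * (2 * ∑ k ∈ Finset.range n, ∑ m ∈ Finset.range n,
          fgnCov H ((k - m : ℤ) : ℝ) ^ 2) := by
        rw [key]; simp_rw [hcov]
    _ ≤ (1 / (n : ℝ)) ^ 2 * (2 * ∑ k ∈ Finset.range n, C) := by
        gcongr with k
        exact sum_range_comp_sub_le_tsum hsum (fun _ => sq_nonneg _) k n
    _ = 2 * C / n := by
        rw [Finset.sum_const, Finset.card_range, nsmul_eq_mul]
        field_simp
end

section
/- Let $\lambda + \mu > 1$, $f, h \in C^\lambda([a,b];\mathbb{R})$, $g \in C^\mu([a,b];\mathbb{R})$, and define $\varphi(y) = \int_a^y f(x)\,dg(x)$ for $y \in [a,b]$ (Young integral). Then $\varphi \in C^\mu([a,b];\mathbb{R})$ and $\int_a^b h(x)\,d\varphi(x) = \int_a^b h(x) f(x)\, dg(x)$. -/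
open Finset

/-- `I` is the (Young / Riemann–Stieltjes) integral `∫_a^b f dg`: left-point Riemann–Stieltjes
sums along partitions of `[a,b]` converge to `I` as the mesh tends to `0`. -/
def IsRSIntegral (f g : ℝ → ℝ) (a b I : ℝ) : Prop :=
  ∀ ε > (0 : ℝ), ∃ δ > (0 : ℝ), ∀ (n : ℕ) (t : ℕ → ℝ),
    t 0 = a → t n = b → (∀ k < n, t k ≤ t (k + 1)) → (∀ k < n, t (k + 1) - t k < δ) →
    |(∑ k ∈ Finset.range n, f (t k) * (g (t (k + 1)) - g (t k))) - I| < ε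

/-!
The core is Young's maximal inequality. In a partition of `[s, t]` into `n` pieces some point has
double gap at most `2 (t - s) / (n - 1)`; deleting it changes the left-point sum by at most
`CF CG (2 (t - s) / (n - 1)) ^ (λ + μ)`, and these terms are summable since `λ + μ > 1`. So every
sum is within `C (t - s) ^ (λ + μ)` of `F s (G t - G s)`. Comparing two partitions through their
common refinement, block by block, shows the sums are Cauchy as the mesh tends to `0`, which gives
the integral together with the same bound.

For the primitive this says `φ t - φ s = f s (g t - g s) + O((t - s) ^ (λ + μ))`. That gives the
Hölder bound, and summing the error against `h` over a partition of mesh `δ` costs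
`O(δ ^ (λ + μ - 1)) → 0`, so the sums for `∫ h dφ` and `∫ h f dg` have the same limit.
-/

open Filter Topology

namespace Young

def HolderOn (C α : ℝ) (f : ℝ → ℝ) (S : Set ℝ) : Prop :=
  ∀ x ∈ S, ∀ y ∈ S, |f y - f x| ≤ C * |y - x| ^ α

section HolderOn

variable {C C' α : ℝ} {f : ℝ → ℝ} {S T : Set ℝ}

theorem HolderOn.mono (hf : HolderOn C α f S) (hTS : T ⊆ S) : HolderOn C α f T :=
  fun x hx y hy => hf x (hTS hx) y (hTS hy)

theorem HolderOn.of_le (h : ∀ x ∈ S, ∀ y ∈ S, x ≤ y → |f y - f x| ≤ C * |y - x| ^ α) :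
    HolderOn C α f S := by
  intro x hx y hy
  rcases le_total x y with hxy | hyx
  · exact h x hx y hy hxy
  · rw [abs_sub_comm, abs_sub_comm y]; exact h y hy x hx hyx

theorem HolderOn.mono_const (hf : HolderOn C α f S) (hC : C ≤ C') : HolderOn C' α f S :=
  fun x hx y hy => (hf x hx y hy).trans (by gcongr)

theorem HolderOn.abs_le {a b x : ℝ} (hf : HolderOn C α f (Set.Icc a b)) (hC : 0 ≤ C)
    (hα : 0 ≤ α) (hx : x ∈ Set.Icc a b) : |f x| ≤ |f a| + C * (b - a) ^ α := by
  have hax : |x - a| ^ α ≤ (b - a) ^ α := by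
    rw [abs_of_nonneg (sub_nonneg.mpr hx.1)]
    gcongr
    · linarith [hx.1]
    · exact hx.2
  calc |f x| ≤ |f a| + |f x - f a| := by simpa using abs_add_le (f a) (f x - f a)
    _ ≤ |f a| + C * (b - a) ^ α := by
      gcongr
      exact (hf a (Set.left_mem_Icc.mpr (hx.1.trans hx.2)) x hx).trans
        (mul_le_mul_of_nonneg_left hax hC)

theorem HolderOn.mul {h : ℝ → ℝ} {Ch Mf Mh : ℝ} (hf : HolderOn C α f S) (hh : HolderOn Ch α h S)
    (hMf : ∀ x ∈ S, |f x| ≤ Mf) (hMh : ∀ x ∈ S, |h x| ≤ Mh) :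
    HolderOn (Mh * C + Mf * Ch) α (fun x => h x * f x) S := by
  intro x hx y hy
  have hMh0 : 0 ≤ Mh := (abs_nonneg _).trans (hMh x hx)
  have hMf0 : 0 ≤ Mf := (abs_nonneg _).trans (hMf x hx)
  calc |h y * f y - h x * f x| = |h y * (f y - f x) + f x * (h y - h x)| := by ring_nf
    _ ≤ |h y| * |f y - f x| + |f x| * |h y - h x| := by
      simpa only [abs_mul] using abs_add_le (h y * (f y - f x)) (f x * (h y - h x))
    _ ≤ Mh * (C * |y - x| ^ α) + Mf * (Ch * |y - x| ^ α) := by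
      gcongr
      exacts [hMh y hy, hf x hx y hy, hMf x hx, hh x hx y hy]
    _ = (Mh * C + Mf * Ch) * |y - x| ^ α := by ring

end HolderOn

section Partition

theorem monotoneOn_Iic_of_le_succ {α : Type*} [Preorder α] {f : ℕ → α} {n : ℕ}
    (hf : ∀ k < n, f k ≤ f (k + 1)) : MonotoneOn f (Set.Iic n) :=
  monotoneOn_of_le_succ Set.ordConnected_Iic fun a _ _ ha => by
    rw [Order.succ_eq_add_one, Set.mem_Iic] at *
    exact hf a ha

noncomputable def rsSum (F G : ℝ → ℝ) (p : ℕ → ℝ) (n : ℕ) : ℝ :=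
  ∑ k ∈ range n, F (p k) * (G (p (k + 1)) - G (p k))

structure IsPartition (s t : ℝ) (n : ℕ) (p : ℕ → ℝ) : Prop where
  first : p 0 = s
  last : p n = t
  mono : ∀ k < n, p k ≤ p (k + 1)

namespace IsPartition

variable {s t : ℝ} {n : ℕ} {p : ℕ → ℝ}

theorem le_of_le (hp : IsPartition s t n p) {j k : ℕ} (hjk : j ≤ k) (hkn : k ≤ n) :
    p j ≤ p k :=
  monotoneOn_Iic_of_le_succ hp.mono (hjk.trans hkn) hkn hjk

theorem mem (hp : IsPartition s t n p) {k : ℕ} (hk : k ≤ n) : p k ∈ Set.Icc s t :=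
  ⟨hp.first ▸ hp.le_of_le (Nat.zero_le k) hk, hp.last ▸ hp.le_of_le hk le_rfl⟩

theorem le (hp : IsPartition s t n p) : s ≤ t := (hp.first ▸ hp.mem (Nat.zero_le n)).2

end IsPartition

theorem isRSIntegral_iff {F G : ℝ → ℝ} {s t I : ℝ} : IsRSIntegral F G s t I ↔
    ∀ ε > 0, ∃ δ > 0, ∀ (n : ℕ) (p : ℕ → ℝ), IsPartition s t n p →
      (∀ k < n, p (k + 1) - p k < δ) → |rsSum F G p n - I| < ε :=
  forall₂_congr fun _ _ => exists_congr fun _ => and_congr_right fun _ =>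
    forall₂_congr fun _ _ =>
      ⟨fun h hp => h hp.first hp.last hp.mono, fun h h0 hn hm => h ⟨h0, hn, hm⟩⟩

end Partition

section RSIntegral

variable {F G : ℝ → ℝ} {s t I : ℝ}

theorem exists_isPartition_mesh_lt (hst : s ≤ t) {δ : ℝ} (hδ : 0 < δ) :
    ∃ (n : ℕ) (p : ℕ → ℝ), IsPartition s t n p ∧ ∀ k < n, p (k + 1) - p k < δ := by
  set n := ⌈(t - s) / δ⌉₊ + 1
  have hn : (0 : ℝ) < n := by positivity
  have hstep : (t - s) / n < δ := by
    rw [div_lt_iff₀ hn, ← div_lt_iff₀' hδ]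
    exact (Nat.le_ceil _).trans_lt (by simp [n])
  refine ⟨n, fun k => s + k * ((t - s) / n), ⟨by simp, by field_simp; ring, fun k _ => ?_⟩,
    fun k _ => ?_⟩
  · have : 0 ≤ (t - s) / n := div_nonneg (sub_nonneg.mpr hst) hn.le
    push_cast; linarith
  · push_cast; linarith

namespace IsRSIntegral

theorem abs_sub_le_of_forall (hI : IsRSIntegral F G s t I) (hst : s ≤ t) {x c δ : ℝ} (hδ : 0 < δ)
    (h : ∀ (n : ℕ) (p : ℕ → ℝ), IsPartition s t n p → (∀ k < n, p (k + 1) - p k < δ) →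
      |rsSum F G p n - x| ≤ c) :
    |I - x| ≤ c := by
  refine le_of_forall_pos_le_add fun ε hε => ?_
  obtain ⟨δ', hδ', hI'⟩ := isRSIntegral_iff.mp hI ε hε
  obtain ⟨n, p, hp, hmesh⟩ := exists_isPartition_mesh_lt hst (lt_min hδ hδ')
  have h₁ := hI' n p hp fun k hk => (hmesh k hk).trans_le (min_le_right _ _)
  have h₂ := h n p hp fun k hk => (hmesh k hk).trans_le (min_le_left _ _)
  calc |I - x| ≤ |I - rsSum F G p n| + |rsSum F G p n - x| := abs_sub_le _ _ _
    _ ≤ c + ε := by rw [abs_sub_comm]; linarith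

theorem congr_rsSum {F' G' : ℝ → ℝ} (hI : IsRSIntegral F G s t I)
    (h : ∀ ε > 0, ∃ δ > 0, ∀ (n : ℕ) (p : ℕ → ℝ), IsPartition s t n p →
      (∀ k < n, p (k + 1) - p k < δ) → |rsSum F' G' p n - rsSum F G p n| < ε) :
    IsRSIntegral F' G' s t I := by
  refine isRSIntegral_iff.mpr fun ε hε => ?_
  obtain ⟨δ₁, hδ₁, h₁⟩ := isRSIntegral_iff.mp hI (ε / 2) (by positivity)
  obtain ⟨δ₂, hδ₂, h₂⟩ := h (ε / 2) (by positivity)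
  refine ⟨min δ₁ δ₂, lt_min hδ₁ hδ₂, fun n p hp hmesh => ?_⟩
  have e₁ := h₁ n p hp fun k hk => (hmesh k hk).trans_le (min_le_left _ _)
  have e₂ := h₂ n p hp fun k hk => (hmesh k hk).trans_le (min_le_right _ _)
  calc |rsSum F' G' p n - I|
      ≤ |rsSum F' G' p n - rsSum F G p n| + |rsSum F G p n - I| := abs_sub_le _ _ _
    _ < ε := by linarith

end IsRSIntegral

theorem exists_isRSIntegral_of_cauchy (hst : s ≤ t)
    (h : ∀ ε > 0, ∃ δ > 0, ∀ (n m : ℕ) (p q : ℕ → ℝ), IsPartition s t n p →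
      IsPartition s t m q → (∀ k < n, p (k + 1) - p k < δ) → (∀ k < m, q (k + 1) - q k < δ) →
      |rsSum F G p n - rsSum F G q m| < ε) :
    ∃ I, IsRSIntegral F G s t I := by
  choose n p hp hmesh using fun N : ℕ =>
    exists_isPartition_mesh_lt hst (Nat.one_div_pos_of_nat (n := N))
  have hfine : ∀ δ > 0, ∃ N, ∀ M ≥ N, ∀ k < n M, p M (k + 1) - p M k < δ := by
    intro δ hδ
    obtain ⟨N, hN⟩ := exists_nat_one_div_lt hδ
    refine ⟨N, fun M hM k hk => (hmesh M k hk).trans (lt_of_le_of_lt ?_ hN)⟩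
    gcongr
  have hcauchy : CauchySeq fun M => rsSum F G (p M) (n M) := by
    refine Metric.cauchySeq_iff'.mpr fun ε hε => ?_
    obtain ⟨δ, hδ, hδε⟩ := h ε hε
    obtain ⟨N, hN⟩ := hfine δ hδ
    exact ⟨N, fun M hM => hδε _ _ _ _ (hp M) (hp N) (hN M hM) (hN N le_rfl)⟩
  obtain ⟨I, hI⟩ := cauchySeq_tendsto_of_complete hcauchy
  refine ⟨I, isRSIntegral_iff.mpr fun ε hε => ?_⟩
  obtain ⟨δ, hδ, hδε⟩ := h (ε / 2) (by positivity)
  obtain ⟨N, hN⟩ := hfine δ hδ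
  refine ⟨δ, hδ, fun n' p' hp' hmesh' => ?_⟩
  have hlim : Tendsto (fun M => |rsSum F G p' n' - rsSum F G (p M) (n M)|) atTop
      (𝓝 |rsSum F G p' n' - I|) := (tendsto_const_nhds.sub hI).abs
  have : |rsSum F G p' n' - I| ≤ ε / 2 :=
    le_of_tendsto hlim (eventually_atTop.mpr
      ⟨N, fun M hM => (hδε _ _ _ _ hp' (hp M) hmesh' (hN M hM)).le⟩)
  linarith

end RSIntegral

section Concatenation

variable {F G : ℝ → ℝ} {u s t : ℝ} {n m : ℕ} {p q : ℕ → ℝ}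

def append (p : ℕ → ℝ) (n : ℕ) (q : ℕ → ℝ) (k : ℕ) : ℝ := if k < n then p k else q (k - n)

theorem append_of_le (hpq : p n = q 0) {k : ℕ} (hk : k ≤ n) : append p n q k = p k := by
  rcases hk.lt_or_eq with hk | rfl
  · simp [append, hk]
  · simp [append, hpq]

theorem append_add (i : ℕ) : append p n q (n + i) = q i := by simp [append]

theorem IsPartition.append (hp : IsPartition u s n p) (hq : IsPartition s t m q) :
    IsPartition u t (n + m) (append p n q) where
  first := (append_of_le (hp.last.trans hq.first.symm) (Nat.zero_le n)).trans hp.first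
  last := (append_add m).trans hq.last
  mono k hk := by
    have hpq := hp.last.trans hq.first.symm
    rcases lt_or_ge k n with hkn | hkn
    · rw [append_of_le hpq hkn.le, append_of_le hpq hkn]; exact hp.mono k hkn
    · obtain ⟨i, rfl⟩ := Nat.exists_eq_add_of_le hkn
      rw [append_add, add_assoc, append_add]; exact hq.mono i (by omega)

theorem append_mesh_lt (hpq : p n = q 0) {δ : ℝ} (hp : ∀ k < n, p (k + 1) - p k < δ)
    (hq : ∀ k < m, q (k + 1) - q k < δ) :
    ∀ k < n + m, append p n q (k + 1) - append p n q k < δ := by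
  intro k hk
  rcases lt_or_ge k n with hkn | hkn
  · rw [append_of_le hpq hkn.le, append_of_le hpq hkn]; exact hp k hkn
  · obtain ⟨i, rfl⟩ := Nat.exists_eq_add_of_le hkn
    rw [append_add, add_assoc, append_add]; exact hq i (by omega)

theorem rsSum_append (hpq : p n = q 0) :
    rsSum F G (append p n q) (n + m) = rsSum F G p n + rsSum F G q m := by
  unfold rsSum
  rw [sum_range_add]
  congr 1
  · refine sum_congr rfl fun k hk => ?_
    rw [mem_range] at hk
    rw [append_of_le hpq hk.le, append_of_le hpq hk]
  · simp only [append_add, add_assoc]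

theorem IsRSIntegral.eq_add {A B C : ℝ} (hus : u ≤ s) (hst : s ≤ t)
    (hA : IsRSIntegral F G u s A) (hB : IsRSIntegral F G s t B)
    (hC : IsRSIntegral F G u t C) : C = A + B := by
  refine eq_of_abs_sub_nonpos (le_of_forall_pos_le_add fun ε hε => ?_)
  obtain ⟨δ₁, hδ₁, h₁⟩ := isRSIntegral_iff.mp hA (ε / 3) (by positivity)
  obtain ⟨δ₂, hδ₂, h₂⟩ := isRSIntegral_iff.mp hB (ε / 3) (by positivity)
  obtain ⟨δ₃, hδ₃, h₃⟩ := isRSIntegral_iff.mp hC (ε / 3) (by positivity)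
  have hδ : 0 < min δ₁ (min δ₂ δ₃) := lt_min hδ₁ (lt_min hδ₂ hδ₃)
  obtain ⟨n, p, hp, hpmesh⟩ := exists_isPartition_mesh_lt hus hδ
  obtain ⟨m, q, hq, hqmesh⟩ := exists_isPartition_mesh_lt hst hδ
  have hpq : p n = q 0 := hp.last.trans hq.first.symm
  have e₁ := h₁ n p hp fun k hk => (hpmesh k hk).trans_le (min_le_left _ _)
  have e₂ := h₂ m q hq fun k hk => (hqmesh k hk).trans_le ((min_le_right _ _).trans
    (min_le_left _ _))
  have e₃ := h₃ (n + m) (append p n q) (hp.append hq) fun k hk =>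
    (append_mesh_lt hpq hpmesh hqmesh k hk).trans_le ((min_le_right _ _).trans (min_le_right _ _))
  rw [rsSum_append hpq] at e₃
  set P := rsSum F G p n
  set Q := rsSum F G q m
  calc |C - (A + B)| = |(C - (P + Q)) + ((P - A) + (Q - B))| := by congr 1; ring
    _ ≤ |C - (P + Q)| + (|P - A| + |Q - B|) :=
      (abs_add_le _ _).trans (add_le_add_right (abs_add_le _ _) _)
    _ ≤ 0 + ε := by rw [abs_sub_comm]; linarith

end Concatenation

section DropPoint

variable {s t : ℝ} {n : ℕ} {p : ℕ → ℝ}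

theorem sum_range_sub_two (p : ℕ → ℝ) (m : ℕ) :
    ∑ k ∈ range m, (p (k + 2) - p k) = p (m + 1) + p m - p 1 - p 0 := by
  induction m with
  | zero => simp
  | succ m ih => rw [sum_range_succ, ih]; ring

theorem IsPartition.exists_gap_le (hp : IsPartition s t (n + 2) p) :
    ∃ k ≤ n, p (k + 2) - p k ≤ 2 * (t - s) / (n + 1) := by
  have hsum : ∑ k ∈ range (n + 1), (p (k + 2) - p k) ≤
      ∑ _k ∈ range (n + 1), 2 * (t - s) / (n + 1) := by
    have h₁ : p (n + 1) ≤ t := hp.last ▸ hp.le_of_le (by omega) le_rfl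
    have h₂ : s ≤ p 1 := hp.first ▸ hp.le_of_le (by omega) (by omega)
    rw [sum_range_sub_two, sum_const, card_range, nsmul_eq_mul, Nat.cast_add_one,
      mul_div_cancel₀ _ (by positivity), hp.last, hp.first]
    linarith
  obtain ⟨k, hk, hle⟩ := exists_le_of_sum_le nonempty_range_add_one hsum
  exact ⟨k, Nat.lt_succ_iff.mp (mem_range.mp hk), hle⟩

/-- Deletes the point `p (k + 1)`. -/
def dropPoint (p : ℕ → ℝ) (k j : ℕ) : ℝ := if j ≤ k then p j else p (j + 1)

theorem IsPartition.dropPoint (hp : IsPartition s t (n + 2) p) {k : ℕ} (hk : k ≤ n) :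
    IsPartition s t (n + 1) (dropPoint p k) where
  first := by simpa [Young.dropPoint] using hp.first
  last := by
    show (if n + 1 ≤ k then _ else _) = t
    rw [if_neg (by omega)]
    exact hp.last
  mono j hj := by
    unfold Young.dropPoint
    split_ifs with h₁ h₂ h₂
    · exact hp.mono j (by omega)
    · exact hp.le_of_le (by omega) (by omega)
    · omega
    · exact hp.mono (j + 1) (by omega)

theorem rsSum_dropPoint (F G : ℝ → ℝ) (p : ℕ → ℝ) {k : ℕ} (hk : k ≤ n) :
    rsSum F G (dropPoint p k) (n + 1) =
      rsSum F G p (n + 2) - (F (p (k + 1)) - F (p k)) * (G (p (k + 2)) - G (p (k + 1))) := by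
  obtain ⟨r, rfl⟩ := Nat.exists_eq_add_of_le hk
  have split₂ : ∀ f : ℕ → ℝ, ∑ j ∈ range (k + r + 2), f j =
      ∑ j ∈ range k, f j + f k + f (k + 1) + ∑ i ∈ range r, f (k + 2 + i) := fun f => by
    rw [show k + r + 2 = k + 2 + r by ring, sum_range_add, sum_range_succ, sum_range_succ]
  have split₁ : ∀ f : ℕ → ℝ, ∑ j ∈ range (k + r + 1), f j =
      ∑ j ∈ range k, f j + f k + ∑ i ∈ range r, f (k + 1 + i) := fun f => by
    rw [show k + r + 1 = k + 1 + r by ring, sum_range_add, sum_range_succ]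
  have hhead : ∀ j ≤ k, dropPoint p k j = p j := fun j hj => if_pos hj
  have htail : ∀ j, k < j → dropPoint p k j = p (j + 1) := fun j hj => if_neg (by omega)
  have ehead : ∑ j ∈ range k, F (dropPoint p k j) * (G (dropPoint p k (j + 1)) -
      G (dropPoint p k j)) = ∑ j ∈ range k, F (p j) * (G (p (j + 1)) - G (p j)) :=
    sum_congr rfl fun j hj => by
      rw [hhead j (mem_range.mp hj).le, hhead (j + 1) (mem_range.mp hj)]
  have etail : ∑ i ∈ range r, F (dropPoint p k (k + 1 + i)) *
      (G (dropPoint p k (k + 1 + i + 1)) - G (dropPoint p k (k + 1 + i))) =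
      ∑ i ∈ range r, F (p (k + 2 + i)) * (G (p (k + 2 + i + 1)) - G (p (k + 2 + i))) :=
    sum_congr rfl fun i _ => by
      rw [htail (k + 1 + i) (by omega), htail (k + 1 + i + 1) (by omega)]; ring_nf
  unfold rsSum
  rw [split₁, split₂, ehead, etail, hhead k le_rfl, htail (k + 1) (by omega)]
  ring

end DropPoint

section MaximalInequality

variable {F G : ℝ → ℝ} {CF CG lam mu s t : ℝ} {n : ℕ} {p : ℕ → ℝ}

theorem HolderOn.abs_sub_mul_sub_le {S : Set ℝ} (hF : HolderOn CF lam F S)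
    (hG : HolderOn CG mu G S) (hCF : 0 ≤ CF) (hCG : 0 ≤ CG) (hlam : 0 ≤ lam) (hmu : 0 ≤ mu)
    {x y z : ℝ} (hx : x ∈ S) (hy : y ∈ S) (hz : z ∈ S) (hxy : x ≤ y) (hyz : y ≤ z) :
    |(F y - F x) * (G z - G y)| ≤ CF * CG * (z - x) ^ (lam + mu) := by
  have hF' : |F y - F x| ≤ CF * (z - x) ^ lam := (hF x hx y hy).trans <| by
    rw [abs_of_nonneg (sub_nonneg.mpr hxy)]; gcongr
  have hG' : |G z - G y| ≤ CG * (z - x) ^ mu := (hG y hy z hz).trans <| by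
    rw [abs_of_nonneg (sub_nonneg.mpr hyz)]; gcongr
  rw [abs_mul, Real.rpow_add_of_nonneg (by linarith) hlam hmu, mul_mul_mul_comm]
  exact mul_le_mul hF' hG' (abs_nonneg _) (mul_nonneg hCF (Real.rpow_nonneg (by linarith) _))

theorem IsPartition.abs_rsSum_sub_le_sum (hF : HolderOn CF lam F (Set.Icc s t))
    (hG : HolderOn CG mu G (Set.Icc s t)) (hCF : 0 ≤ CF) (hCG : 0 ≤ CG) (hlam : 0 ≤ lam)
    (hmu : 0 ≤ mu) (hp : IsPartition s t n p) :
    |rsSum F G p n - F s * (G t - G s)| ≤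
      CF * CG * ∑ j ∈ range (n - 1), (2 * (t - s) / (j + 1)) ^ (lam + mu) := by
  induction n using Nat.strong_induction_on generalizing p with
  | _ n ih =>
  rcases n with _ | _ | n
  · simp [rsSum, ← hp.first, ← hp.last]
  · simp [rsSum, hp.first, hp.last]
  · obtain ⟨k, hk, hgap⟩ := hp.exists_gap_le
    have hdrop := ih (n + 1) (by omega) (hp.dropPoint hk)
    have hremoved := hF.abs_sub_mul_sub_le hG hCF hCG hlam hmu (hp.mem (k := k) (by omega))
      (hp.mem (by omega)) (hp.mem (by omega)) (hp.mono k (by omega))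
      (hp.mono (k + 1) (by omega))
    have hgap' : (p (k + 2) - p k) ^ (lam + mu) ≤ (2 * (t - s) / (n + 1)) ^ (lam + mu) :=
      Real.rpow_le_rpow (sub_nonneg.mpr (hp.le_of_le (by omega) (by omega))) hgap (by positivity)
    rw [rsSum_dropPoint F G p hk, show n + 1 - 1 = n by omega] at hdrop
    rw [show n + 2 - 1 = n + 1 by omega, sum_range_succ, mul_add]
    set R := (F (p (k + 1)) - F (p k)) * (G (p (k + 2)) - G (p (k + 1)))
    calc |rsSum F G p (n + 2) - F s * (G t - G s)|
        = |(rsSum F G p (n + 2) - R - F s * (G t - G s)) + R| := by ring_nf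
      _ ≤ _ := (abs_add_le _ _).trans (add_le_add hdrop (hremoved.trans (by gcongr)))

/-- `2 ^ θ * ζ(θ)` -/
noncomputable def youngConst (θ : ℝ) : ℝ := ∑' j : ℕ, (2 / ((j : ℝ) + 1)) ^ θ

theorem summable_two_div_rpow {θ : ℝ} (hθ : 1 < θ) :
    Summable fun j : ℕ => (2 / ((j : ℝ) + 1)) ^ θ := by
  refine (((Real.summable_one_div_nat_add_rpow 1 θ).mpr hθ).mul_left (2 ^ θ)).congr fun j => ?_
  rw [abs_of_nonneg (by positivity), Real.div_rpow (by norm_num) (by positivity)]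
  ring

theorem youngConst_nonneg (θ : ℝ) : 0 ≤ youngConst θ := tsum_nonneg fun _ => by positivity

theorem IsPartition.abs_rsSum_sub_le (hF : HolderOn CF lam F (Set.Icc s t))
    (hG : HolderOn CG mu G (Set.Icc s t)) (hCF : 0 ≤ CF) (hCG : 0 ≤ CG) (hlam : 0 ≤ lam)
    (hmu : 0 ≤ mu) (hθ : 1 < lam + mu) (hp : IsPartition s t n p) :
    |rsSum F G p n - F s * (G t - G s)| ≤
      CF * CG * youngConst (lam + mu) * (t - s) ^ (lam + mu) := by
  have hts : 0 ≤ t - s := sub_nonneg.mpr hp.le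
  have hsum : ∑ j ∈ range (n - 1), (2 * (t - s) / (j + 1)) ^ (lam + mu) =
      (t - s) ^ (lam + mu) * ∑ j ∈ range (n - 1), (2 / ((j : ℝ) + 1)) ^ (lam + mu) := by
    rw [mul_sum]
    refine sum_congr rfl fun j _ => ?_
    rw [← Real.mul_rpow hts (by positivity), mul_div_assoc']
    ring_nf
  calc |rsSum F G p n - F s * (G t - G s)|
      ≤ CF * CG * ((t - s) ^ (lam + mu) *
          ∑ j ∈ range (n - 1), (2 / ((j : ℝ) + 1)) ^ (lam + mu)) :=
        hsum ▸ hp.abs_rsSum_sub_le_sum hF hG hCF hCG hlam hmu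
    _ ≤ CF * CG * ((t - s) ^ (lam + mu) * youngConst (lam + mu)) := by
        gcongr
        exact (summable_two_div_rpow hθ).sum_le_tsum _ fun _ _ => by positivity
    _ = CF * CG * youngConst (lam + mu) * (t - s) ^ (lam + mu) := by ring

end MaximalInequality

section CommonRefinement

variable {s t : ℝ} {n N : ℕ} {p r : ℕ → ℝ}

def Refines (r : ℕ → ℝ) (N : ℕ) (p : ℕ → ℝ) (n : ℕ) : Prop :=
  ∃ σ : ℕ → ℕ, σ 0 = 0 ∧ σ n = N ∧ (∀ j < n, σ j ≤ σ (j + 1)) ∧ ∀ j ≤ n, r (σ j) = p j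

theorem exists_isPartition_strictMonoOn_of_finset (T : Finset ℝ) (hs : s ∈ T) (ht : t ∈ T)
    (hT : ∀ x ∈ T, x ∈ Set.Icc s t) :
    ∃ (N : ℕ) (r : ℕ → ℝ), IsPartition s t N r ∧ StrictMonoOn r (Set.Iic N) ∧
      ∀ x ∈ T, ∃ k ≤ N, r k = x := by
  have hne : T.Nonempty := ⟨s, hs⟩
  have hcard : T.card = T.card - 1 + 1 := (Nat.succ_pred_eq_of_pos hne.card_pos).symm
  set N := T.card - 1
  set e := T.orderEmbOfFin hcard
  have hmin : T.min' hne = s :=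
    le_antisymm (T.min'_le s hs) (T.le_min' hne s fun x hx => (hT x hx).1)
  have hmax : T.max' hne = t :=
    le_antisymm (T.max'_le hne t fun x hx => (hT x hx).2) (T.le_max' t ht)
  refine ⟨N, fun k => e ⟨min k N, by omega⟩, ⟨?_, ?_, fun k _ => ?_⟩, ?_, fun x hx => ?_⟩
  · simpa [hmin] using orderEmbOfFin_zero hcard (Nat.succ_pos N)
  · simpa [hmax] using orderEmbOfFin_last hcard (Nat.succ_pos N)
  · exact e.monotone (Fin.mk_le_mk.mpr (by omega))
  · intro j hj k hk hjk
    simp only [Set.mem_Iic] at hj hk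
    exact e.strictMono (Fin.mk_lt_mk.mpr (by omega))
  · obtain ⟨⟨k, hk⟩, rfl⟩ : x ∈ Set.range e := by rwa [range_orderEmbOfFin]
    exact ⟨k, by omega, by simp [Nat.min_eq_left (by omega : k ≤ N)]⟩

theorem IsPartition.refines_of_strictMonoOn {l : ℕ} {w : ℕ → ℝ} (hw : IsPartition s t l w)
    (hr : IsPartition s t N r) (hmono : StrictMonoOn r (Set.Iic N))
    (hcover : ∀ j ≤ l, ∃ k ≤ N, r k = w j) : Refines r N w l := by
  have hindex : ∀ j, ∃ k, j ≤ l → k ≤ N ∧ r k = w j := fun j =>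
    if hj : j ≤ l then (hcover j hj).imp fun _ h _ => h else ⟨0, fun h => absurd h hj⟩
  choose σ hσ using hindex
  have hσN : ∀ j ≤ l, σ j ≤ N := fun j hj => (hσ j hj).1
  have hrσ : ∀ j ≤ l, r (σ j) = w j := fun j hj => (hσ j hj).2
  refine ⟨σ, ?_, ?_, fun j hj => ?_, hrσ⟩
  · refine hmono.injOn (hσN 0 (Nat.zero_le l)) (Nat.zero_le N) ?_
    rw [hrσ 0 (Nat.zero_le l), hw.first, hr.first]
  · refine hmono.injOn (hσN l le_rfl) (le_refl N) ?_
    rw [hrσ l le_rfl, hw.last, hr.last]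
  · refine (hmono.le_iff_le (hσN j hj.le) (hσN (j + 1) hj)).mp ?_
    rw [hrσ j hj.le, hrσ (j + 1) hj]
    exact hw.mono j hj

theorem IsPartition.exists_common_refinement {m : ℕ} {q : ℕ → ℝ} (hp : IsPartition s t n p)
    (hq : IsPartition s t m q) :
    ∃ (N : ℕ) (r : ℕ → ℝ), IsPartition s t N r ∧ Refines r N p n ∧ Refines r N q m := by
  classical
  set T := (range (n + 1)).image p ∪ (range (m + 1)).image q
  have hpT : ∀ j ≤ n, p j ∈ T := fun j hj =>
    mem_union_left _ (mem_image_of_mem p (mem_range.mpr (by omega)))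
  have hqT : ∀ j ≤ m, q j ∈ T := fun j hj =>
    mem_union_right _ (mem_image_of_mem q (mem_range.mpr (by omega)))
  have hT : ∀ x ∈ T, x ∈ Set.Icc s t := by
    intro x hx
    rcases mem_union.mp hx with hx | hx <;> obtain ⟨j, hj, rfl⟩ := mem_image.mp hx
    exacts [hp.mem (by simpa [Nat.lt_succ_iff] using hj),
      hq.mem (by simpa [Nat.lt_succ_iff] using hj)]
  obtain ⟨N, r, hr, hmono, hcover⟩ := exists_isPartition_strictMonoOn_of_finset T
    (hp.first ▸ hpT 0 (Nat.zero_le n)) (hp.last ▸ hpT n le_rfl) hT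
  exact ⟨N, r, hr, hp.refines_of_strictMonoOn hr hmono fun j hj => hcover _ (hpT j hj),
    hq.refines_of_strictMonoOn hr hmono fun j hj => hcover _ (hqT j hj)⟩

end CommonRefinement

section Refinement

variable {F G : ℝ → ℝ} {CF CG lam mu s t : ℝ} {n N : ℕ} {p r : ℕ → ℝ}

theorem sum_range_eq_sum_sum_Ico {M : Type*} [AddCommMonoid M] (f : ℕ → M) {σ : ℕ → ℕ}
    (h0 : σ 0 = 0) (hσ : ∀ j < n, σ j ≤ σ (j + 1)) :
    ∑ k ∈ range (σ n), f k = ∑ j ∈ range n, ∑ k ∈ Ico (σ j) (σ (j + 1)), f k := by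
  induction n with
  | zero => simp [h0]
  | succ n ih =>
    rw [sum_range_succ, ← ih fun j hj => hσ j (by omega), range_eq_Ico, range_eq_Ico,
      sum_Ico_consecutive _ (Nat.zero_le _) (hσ n (by omega))]

theorem IsPartition.abs_rsSum_sub_le_of_refines (hF : HolderOn CF lam F (Set.Icc s t))
    (hG : HolderOn CG mu G (Set.Icc s t)) (hCF : 0 ≤ CF) (hCG : 0 ≤ CG) (hlam : 0 ≤ lam)
    (hmu : 0 ≤ mu) (hθ : 1 < lam + mu) (hp : IsPartition s t n p) (hr : IsPartition s t N r)
    (hrp : Refines r N p n) :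
    |rsSum F G r N - rsSum F G p n| ≤
      CF * CG * youngConst (lam + mu) * ∑ j ∈ range n, (p (j + 1) - p j) ^ (lam + mu) := by
  obtain ⟨σ, hσ0, hσn, hσ, hrσ⟩ := hrp
  have hblock : ∀ j < n,
      IsPartition (p j) (p (j + 1)) (σ (j + 1) - σ j) fun i => r (σ j + i) := fun j hj =>
    { first := hrσ j hj.le
      last := by simpa [Nat.add_sub_cancel' (hσ j hj)] using hrσ (j + 1) hj
      mono := fun i hi => by
        have : σ (j + 1) ≤ N := hσn ▸ monotoneOn_Iic_of_le_succ hσ hj (le_refl n) hj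
        exact hr.mono _ (by omega) }
  have hsub : ∀ j < n, Set.Icc (p j) (p (j + 1)) ⊆ Set.Icc s t := fun j hj =>
    Set.Icc_subset_Icc (hp.mem hj.le).1 (hp.mem hj).2
  have hblockSum : ∀ j < n, ∑ k ∈ Ico (σ j) (σ (j + 1)), F (r k) * (G (r (k + 1)) - G (r k)) =
      rsSum F G (fun i => r (σ j + i)) (σ (j + 1) - σ j) := fun j _ => by
    rw [sum_Ico_eq_sum_range, rsSum]
    simp only [add_assoc]
  calc |rsSum F G r N - rsSum F G p n|
      = |∑ j ∈ range n, (rsSum F G (fun i => r (σ j + i)) (σ (j + 1) - σ j) -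
          F (p j) * (G (p (j + 1)) - G (p j)))| := by
        rw [sum_sub_distrib, ← sum_congr rfl fun j hj => hblockSum j (mem_range.mp hj),
          ← sum_range_eq_sum_sum_Ico _ hσ0 hσ, hσn, rsSum, rsSum]
    _ ≤ ∑ j ∈ range n, CF * CG * youngConst (lam + mu) * (p (j + 1) - p j) ^ (lam + mu) := by
        refine (abs_sum_le_sum_abs _ _).trans (sum_le_sum fun j hj => ?_)
        have hj := mem_range.mp hj
        exact (hblock j hj).abs_rsSum_sub_le ((hF.mono (hsub j hj))) (hG.mono (hsub j hj))
          hCF hCG hlam hmu hθ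
    _ = _ := by rw [mul_sum]

theorem IsPartition.sum_rpow_sub_le {θ δ : ℝ} (hθ : 1 ≤ θ) (hp : IsPartition s t n p)
    (hδ : ∀ k < n, p (k + 1) - p k ≤ δ) :
    ∑ j ∈ range n, (p (j + 1) - p j) ^ θ ≤ δ ^ (θ - 1) * (t - s) := by
  calc ∑ j ∈ range n, (p (j + 1) - p j) ^ θ
      = ∑ j ∈ range n, (p (j + 1) - p j) ^ (θ - 1) * (p (j + 1) - p j) :=
        sum_congr rfl fun j hj => by
          rw [← Real.rpow_add_one' (sub_nonneg.mpr (hp.mono j (mem_range.mp hj))) (by linarith)]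
          ring_nf
    _ ≤ ∑ j ∈ range n, δ ^ (θ - 1) * (p (j + 1) - p j) := by
        refine sum_le_sum fun j hj => ?_
        have h0 := sub_nonneg.mpr (hp.mono j (mem_range.mp hj))
        gcongr
        exact hδ j (mem_range.mp hj)
    _ = δ ^ (θ - 1) * (t - s) := by rw [← mul_sum, sum_range_sub, hp.last, hp.first]

theorem IsPartition.abs_rsSum_sub_rsSum_le (hF : HolderOn CF lam F (Set.Icc s t))
    (hG : HolderOn CG mu G (Set.Icc s t)) (hCF : 0 ≤ CF) (hCG : 0 ≤ CG) (hlam : 0 ≤ lam)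
    (hmu : 0 ≤ mu) (hθ : 1 < lam + mu) {m : ℕ} {q : ℕ → ℝ} (hp : IsPartition s t n p)
    (hq : IsPartition s t m q) {δ : ℝ} (hpδ : ∀ k < n, p (k + 1) - p k ≤ δ)
    (hqδ : ∀ k < m, q (k + 1) - q k ≤ δ) :
    |rsSum F G p n - rsSum F G q m| ≤
      2 * (CF * CG * youngConst (lam + mu)) * δ ^ (lam + mu - 1) * (t - s) := by
  obtain ⟨N, r, hr, hrp, hrq⟩ := hp.exists_common_refinement hq
  have hK : 0 ≤ CF * CG * youngConst (lam + mu) := by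
    have := youngConst_nonneg (lam + mu); positivity
  have hp' := (hp.abs_rsSum_sub_le_of_refines hF hG hCF hCG hlam hmu hθ hr hrp).trans
    (mul_le_mul_of_nonneg_left (hp.sum_rpow_sub_le hθ.le hpδ) hK)
  have hq' := (hq.abs_rsSum_sub_le_of_refines hF hG hCF hCG hlam hmu hθ hr hrq).trans
    (mul_le_mul_of_nonneg_left (hq.sum_rpow_sub_le hθ.le hqδ) hK)
  calc |rsSum F G p n - rsSum F G q m|
      ≤ |rsSum F G r N - rsSum F G p n| + |rsSum F G r N - rsSum F G q m| := by
        rw [abs_sub_comm (rsSum F G r N)]; exact abs_sub_le _ _ _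
    _ ≤ _ := by linarith

end Refinement

section Existence

variable {F G : ℝ → ℝ} {CF CG lam mu s t I : ℝ}

theorem exists_pos_mul_rpow_lt (c : ℝ) {e ε : ℝ} (he : 0 < e) (hε : 0 < ε) :
    ∃ δ > 0, c * δ ^ e < ε := by
  have hlim : Tendsto (fun δ : ℝ => c * δ ^ e) (𝓝[>] 0) (𝓝 0) := by
    simpa [Real.zero_rpow he.ne'] using
      ((Real.continuousAt_rpow_const 0 e (Or.inr he.le)).tendsto.const_mul c).mono_left
        nhdsWithin_le_nhds
  obtain ⟨δ, hδε, hδ⟩ := ((hlim.eventually (gt_mem_nhds hε)).and self_mem_nhdsWithin).exists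
  exact ⟨δ, hδ, hδε⟩

theorem exists_isRSIntegral (hF : HolderOn CF lam F (Set.Icc s t))
    (hG : HolderOn CG mu G (Set.Icc s t)) (hCF : 0 ≤ CF) (hCG : 0 ≤ CG) (hlam : 0 ≤ lam)
    (hmu : 0 ≤ mu) (hθ : 1 < lam + mu) (hst : s ≤ t) : ∃ I, IsRSIntegral F G s t I := by
  refine exists_isRSIntegral_of_cauchy hst fun ε hε => ?_
  obtain ⟨δ, hδ, hδε⟩ := exists_pos_mul_rpow_lt (2 * (CF * CG * youngConst (lam + mu)) * (t - s))
    (sub_pos.mpr hθ) hε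
  refine ⟨δ, hδ, fun n m p q hp hq hpδ hqδ => ?_⟩
  calc |rsSum F G p n - rsSum F G q m|
      ≤ 2 * (CF * CG * youngConst (lam + mu)) * δ ^ (lam + mu - 1) * (t - s) :=
        hp.abs_rsSum_sub_rsSum_le hF hG hCF hCG hlam hmu hθ hq (fun k hk => (hpδ k hk).le)
          fun k hk => (hqδ k hk).le
    _ < ε := by linarith

theorem IsRSIntegral.abs_sub_mul_sub_le (hI : IsRSIntegral F G s t I)
    (hF : HolderOn CF lam F (Set.Icc s t)) (hG : HolderOn CG mu G (Set.Icc s t)) (hCF : 0 ≤ CF)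
    (hCG : 0 ≤ CG) (hlam : 0 ≤ lam) (hmu : 0 ≤ mu) (hθ : 1 < lam + mu) (hst : s ≤ t) :
    |I - F s * (G t - G s)| ≤ CF * CG * youngConst (lam + mu) * (t - s) ^ (lam + mu) :=
  IsRSIntegral.abs_sub_le_of_forall hI hst one_pos fun _ _ hp _ =>
    hp.abs_rsSum_sub_le hF hG hCF hCG hlam hmu hθ

end Existence

section Primitive

variable {f g φ : ℝ → ℝ} {Cf Cg lam mu a b : ℝ}

theorem abs_sub_sub_mul_sub_le_of_primitive (hf : HolderOn Cf lam f (Set.Icc a b))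
    (hg : HolderOn Cg mu g (Set.Icc a b)) (hCf : 0 ≤ Cf) (hCg : 0 ≤ Cg) (hlam : 0 ≤ lam)
    (hmu : 0 ≤ mu) (hθ : 1 < lam + mu) (hφ : ∀ y ∈ Set.Icc a b, IsRSIntegral f g a y (φ y))
    {s t : ℝ} (hs : s ∈ Set.Icc a b) (ht : t ∈ Set.Icc a b) (hst : s ≤ t) :
    |φ t - φ s - f s * (g t - g s)| ≤ Cf * Cg * youngConst (lam + mu) * (t - s) ^ (lam + mu) := by
  have hsub : Set.Icc s t ⊆ Set.Icc a b := Set.Icc_subset_Icc hs.1 ht.2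
  obtain ⟨B, hB⟩ := exists_isRSIntegral (hf.mono hsub) (hg.mono hsub) hCf hCg hlam hmu hθ hst
  rw [IsRSIntegral.eq_add hs.1 hst (hφ s hs) hB (hφ t ht), add_sub_cancel_left]
  exact IsRSIntegral.abs_sub_mul_sub_le hB (hf.mono hsub) (hg.mono hsub) hCf hCg hlam hmu hθ hst

theorem holderOn_primitive (hf : HolderOn Cf lam f (Set.Icc a b))
    (hg : HolderOn Cg mu g (Set.Icc a b)) (hCf : 0 ≤ Cf) (hCg : 0 ≤ Cg) (hlam : 0 ≤ lam)
    (hmu : 0 ≤ mu) (hθ : 1 < lam + mu) (hφ : ∀ y ∈ Set.Icc a b, IsRSIntegral f g a y (φ y))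
    {Mf : ℝ} (hMf : ∀ x ∈ Set.Icc a b, |f x| ≤ Mf) :
    HolderOn (Mf * Cg + Cf * Cg * youngConst (lam + mu) * (b - a) ^ lam) mu φ (Set.Icc a b) := by
  refine HolderOn.of_le fun s hs t ht hst => ?_
  have hts : 0 ≤ t - s := sub_nonneg.mpr hst
  have hK : 0 ≤ Cf * Cg * youngConst (lam + mu) := by
    have := youngConst_nonneg (lam + mu); positivity
  have hfs : |f s * (g t - g s)| ≤ Mf * (Cg * |t - s| ^ mu) := by
    rw [abs_mul]
    exact mul_le_mul (hMf s hs) (hg s hs t ht) (abs_nonneg _) ((abs_nonneg _).trans (hMf s hs))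
  have hpow : (t - s) ^ (lam + mu) ≤ (b - a) ^ lam * (t - s) ^ mu := by
    rw [Real.rpow_add_of_nonneg hts hlam hmu]
    gcongr <;> linarith [hs.1, ht.2]
  rw [abs_of_nonneg hts] at hfs ⊢
  calc |φ t - φ s| ≤ |φ t - φ s - f s * (g t - g s)| + |f s * (g t - g s)| := by
        simpa using abs_add_le (φ t - φ s - f s * (g t - g s)) (f s * (g t - g s))
    _ ≤ Cf * Cg * youngConst (lam + mu) * ((b - a) ^ lam * (t - s) ^ mu) +
          Mf * (Cg * (t - s) ^ mu) :=
        add_le_add ((abs_sub_sub_mul_sub_le_of_primitive hf hg hCf hCg hlam hmu hθ hφ hs ht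
          hst).trans (mul_le_mul_of_nonneg_left hpow hK)) hfs
    _ = _ := by ring

theorem IsRSIntegral.change_integrator {f g h φ : ℝ → ℝ} {a b I M K θ : ℝ}
    (hI : IsRSIntegral (fun x => h x * f x) g a b I) (hM : ∀ x ∈ Set.Icc a b, |h x| ≤ M)
    (hK : 0 ≤ K) (hθ : 1 < θ)
    (hinc : ∀ s ∈ Set.Icc a b, ∀ t ∈ Set.Icc a b, s ≤ t →
      |φ t - φ s - f s * (g t - g s)| ≤ K * (t - s) ^ θ) :
    IsRSIntegral h φ a b I := by
  refine IsRSIntegral.congr_rsSum hI fun ε hε => ?_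
  obtain ⟨δ, hδ, hδε⟩ := exists_pos_mul_rpow_lt (M * K * (b - a)) (sub_pos.mpr hθ) hε
  refine ⟨δ, hδ, fun n p hp hmesh => ?_⟩
  have hab : a ≤ b := hp.le
  have hM0 : 0 ≤ M := (abs_nonneg _).trans (hM a (Set.left_mem_Icc.mpr hab))
  have hterm : ∀ k ∈ range n, |h (p k) * (φ (p (k + 1)) - φ (p k) -
      f (p k) * (g (p (k + 1)) - g (p k)))| ≤ M * K * (p (k + 1) - p k) ^ θ := fun k hk => by
    have hk := mem_range.mp hk
    rw [abs_mul, mul_assoc]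
    exact mul_le_mul (hM _ (hp.mem hk.le)) (hinc _ (hp.mem hk.le) _ (hp.mem hk) (hp.mono k hk))
      (abs_nonneg _) hM0
  calc |rsSum h φ p n - rsSum (fun x => h x * f x) g p n|
      = |∑ k ∈ range n, h (p k) * (φ (p (k + 1)) - φ (p k) -
          f (p k) * (g (p (k + 1)) - g (p k)))| := by
        rw [rsSum, rsSum, ← sum_sub_distrib]; ring_nf
    _ ≤ M * K * ∑ k ∈ range n, (p (k + 1) - p k) ^ θ := by
        rw [mul_sum]; exact (abs_sum_le_sum_abs _ _).trans (sum_le_sum hterm)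
    _ ≤ M * K * (δ ^ (θ - 1) * (b - a)) := by
        gcongr
        exact hp.sum_rpow_sub_le hθ.le fun k hk => (hmesh k hk).le
    _ < ε := by linarith

end Primitive

end Young

open Young

/-- **Density formula for Young integrals:** if `f, h ∈ C^λ`, `g ∈ C^μ`, `λ + μ > 1`, and
`φ(y) = ∫_a^y f dg`, then `φ ∈ C^μ([a,b])` and `∫_a^b h dφ = ∫_a^b h f dg`. -/
theorem stmt10 (lam mu : ℝ) (hlam : lam ∈ Set.Ioc (0 : ℝ) 1) (hmu : mu ∈ Set.Ioc (0 : ℝ) 1)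
    (hsum : 1 < lam + mu) (a b : ℝ) (hab : a ≤ b)
    (f h g φ : ℝ → ℝ) (Cf Ch Cg : ℝ)
    (hf : ∀ s ∈ Set.Icc a b, ∀ t ∈ Set.Icc a b, |f t - f s| ≤ Cf * |t - s| ^ lam)
    (hh : ∀ s ∈ Set.Icc a b, ∀ t ∈ Set.Icc a b, |h t - h s| ≤ Ch * |t - s| ^ lam)
    (hg : ∀ s ∈ Set.Icc a b, ∀ t ∈ Set.Icc a b, |g t - g s| ≤ Cg * |t - s| ^ mu)
    (hφ : ∀ y ∈ Set.Icc a b, IsRSIntegral f g a y (φ y)) :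
    (∃ Cφ : ℝ, ∀ s ∈ Set.Icc a b, ∀ t ∈ Set.Icc a b, |φ t - φ s| ≤ Cφ * |t - s| ^ mu) ∧
    ∃ I : ℝ, IsRSIntegral (fun x => h x * f x) g a b I ∧ IsRSIntegral h φ a b I := by
  have hlam0 : 0 ≤ lam := hlam.1.le
  have hmu0 : 0 ≤ mu := hmu.1.le
  have hCf : 0 ≤ max Cf 0 := le_max_right _ _
  have hCh : 0 ≤ max Ch 0 := le_max_right _ _
  have hCg : 0 ≤ max Cg 0 := le_max_right _ _
  have hf' : HolderOn (max Cf 0) lam f (Set.Icc a b) := HolderOn.mono_const hf (le_max_left _ _)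
  have hh' : HolderOn (max Ch 0) lam h (Set.Icc a b) := HolderOn.mono_const hh (le_max_left _ _)
  have hg' : HolderOn (max Cg 0) mu g (Set.Icc a b) := HolderOn.mono_const hg (le_max_left _ _)
  have hMf := fun x (hx : x ∈ Set.Icc a b) => hf'.abs_le hCf hlam0 hx
  have hMh := fun x (hx : x ∈ Set.Icc a b) => hh'.abs_le hCh hlam0 hx
  have hMf0 := (abs_nonneg _).trans (hMf a (Set.left_mem_Icc.mpr hab))
  have hMh0 := (abs_nonneg _).trans (hMh a (Set.left_mem_Icc.mpr hab))
  have hK := youngConst_nonneg (lam + mu)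
  obtain ⟨I, hI⟩ := exists_isRSIntegral (hf'.mul hh' hMf hMh) hg' (by positivity) hCg hlam0 hmu0
    hsum hab
  exact ⟨⟨_, holderOn_primitive hf' hg' hCf hCg hlam0 hmu0 hsum hφ hMf⟩, I, hI,
    hI.change_integrator hMh (by positivity) hsum fun s hs t ht hst =>
      abs_sub_sub_mul_sub_le_of_primitive hf' hg' hCf hCg hlam0 hmu0 hsum hφ hs ht hst⟩
end

section
/- Let $q > 1$, $\alpha \in (1/q, 1)$, and $f : [0,\infty) \to \mathbb{R}$ be continuous. Then there exists a constant $c_{\alpha,q} > 0$ depending only on $\alpha$ and $q$ such that for all $0 \leq s < t$, $\Big( \sup_{u \neq v \in [s,t]} \frac{|f(u)-f(v)|}{|u-v|^{\alpha - 1/q}} \Big)^q \leq c_{\alpha,q} \int_s^t \int_s^t \frac{|f(u)-f(v)|^q}{|u-v|^{1+q\alpha}}\, du\, dv$. -/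
/-!
Dyadic averaging. For `u < v` and `d = v - u`, compare `f u` and `f v` with the averages of `f`
over `[u, u + d / 2ⁿ]` and `[v - d / 2ⁿ, v]`: both chains start from the average over `[u, v]` and
converge to `f u` and `f v`. By Jensen's inequality, the averages of `f` over intervals `J ⊆ I`
differ by at most `(|I|⁻¹ |J|⁻¹ ∫_I ∫_J |f x - f y| ^ q) ^ (1 / q)`; since `|x - y| ≤ |I|` there,
for `|J| = |I| / 2` this is at most `(2 E) ^ (1 / q) |I| ^ (α - 1 / q)`, where `E` is the double
integral. These steps decay geometrically with ratio `2 ^ (-(α - 1 / q)) < 1`, and summing them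
gives `|f u - f v| ≤ C E ^ (1 / q) d ^ (α - 1 / q)`.
-/

open MeasureTheory Set Filter
open scoped ENNReal Topology

section Averages

variable {α : Type*} [MeasurableSpace α] {μ ν : Measure α}

theorem lintegral_le_lintegral_rpow_one_div [IsProbabilityMeasure μ] {f : α → ℝ≥0∞}
    (hf : AEMeasurable f μ) {p : ℝ} (hp : 1 ≤ p) :
    ∫⁻ x, f x ∂μ ≤ (∫⁻ x, f x ^ p ∂μ) ^ (1 / p) := by
  have h := eLpNorm_le_eLpNorm_of_exponent_le (p := 1) (q := ENNReal.ofReal p)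
    (by simpa using hp) hf.aestronglyMeasurable
  rwa [eLpNorm_one_eq_lintegral_enorm, eLpNorm_eq_lintegral_rpow_enorm_toReal
    (by simp; linarith) ENNReal.ofReal_ne_top, ENNReal.toReal_ofReal (by linarith)] at h

variable {E : Type*} [NormedAddCommGroup E] [NormedSpace ℝ E] [CompleteSpace E]

theorem enorm_integral_sub_integral_le [IsProbabilityMeasure μ] [IsProbabilityMeasure ν]
    {f : α → E} (hfμ : Integrable f μ) (hfν : Integrable f ν) {p : ℝ} (hp : 1 ≤ p) :
    ‖∫ x, f x ∂μ - ∫ y, f y ∂ν‖ₑ ≤ (∫⁻ x, ∫⁻ y, ‖f x - f y‖ₑ ^ p ∂ν ∂μ) ^ (1 / p) := by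
  have hF : AEMeasurable (fun z : α × α ↦ ‖f z.1 - f z.2‖ₑ ^ p) (μ.prod ν) :=
    ((hfμ.1.comp_fst.sub hfν.1.comp_snd).enorm).pow_const p
  calc ‖∫ x, f x ∂μ - ∫ y, f y ∂ν‖ₑ = ‖∫ x, ∫ y, f x - f y ∂ν ∂μ‖ₑ := by
        rw [integral_congr_ae (ae_of_all _ fun x ↦ integral_sub (integrable_const (f x)) hfν)]
        simp [integral_sub hfμ (integrable_const _)]
    _ ≤ ∫⁻ x, ∫⁻ y, ‖f x - f y‖ₑ ∂ν ∂μ :=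
        (enorm_integral_le_lintegral_enorm _).trans
          (lintegral_mono fun _ ↦ enorm_integral_le_lintegral_enorm _)
    _ ≤ ∫⁻ x, (∫⁻ y, ‖f x - f y‖ₑ ^ p ∂ν) ^ (1 / p) ∂μ :=
        lintegral_mono fun x ↦ lintegral_le_lintegral_rpow_one_div
          ((aestronglyMeasurable_const.sub hfν.1).enorm) hp
    _ ≤ (∫⁻ x, ∫⁻ y, ‖f x - f y‖ₑ ^ p ∂ν ∂μ) ^ (1 / p) := by
        refine (lintegral_le_lintegral_rpow_one_div
          (hF.lintegral_prod_right'.pow_const _) hp).trans_eq ?_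
        simp_rw [← ENNReal.rpow_mul, one_div_mul_cancel (by linarith : p ≠ 0), ENNReal.rpow_one]

theorem enorm_average_sub_average_le [IsFiniteMeasure μ] [NeZero μ] [IsFiniteMeasure ν]
    [NeZero ν] {f : α → E} (hfμ : Integrable f μ) (hfν : Integrable f ν) {p : ℝ} (hp : 1 ≤ p) :
    ‖⨍ x, f x ∂μ - ⨍ y, f y ∂ν‖ₑ ≤ (⨍⁻ x, ⨍⁻ y, ‖f x - f y‖ₑ ^ p ∂ν ∂μ) ^ (1 / p) := by
  simp_rw [average, laverage]
  exact enorm_integral_sub_integral_le (hfμ.smul_measure (by simp [NeZero.ne]))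
    (hfν.smul_measure (by simp [NeZero.ne])) hp

end Averages

theorem ContinuousOn.exists_continuous_eqOn_Icc {α β : Type*} [LinearOrder α]
    [TopologicalSpace α] [OrderTopology α] [TopologicalSpace β] {f : α → β} {s t : α} (hst : s ≤ t)
    (hf : ContinuousOn f (Icc s t)) :
    ∃ g : α → β, Continuous g ∧ EqOn f g (Icc s t) :=
  ⟨IccExtend hst ((Icc s t).domRestrict f), hf.domRestrict.Icc_extend',
    fun _ hx ↦ (IccExtend_of_mem hst ((Icc s t).domRestrict f) hx).symm⟩

/-- The `q`-th power of the Gagliardo seminorm of `f` in `W^{(e - 1) / q, q}(s, t)`. -/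
noncomputable def gagliardoEnergy (f : ℝ → ℝ) (q e s t : ℝ) : ℝ≥0∞ :=
  ∫⁻ x in Icc s t, ∫⁻ y in Icc s t, ENNReal.ofReal (|f x - f y| ^ q / |x - y| ^ e)

theorem gagliardoEnergy_congr {f g : ℝ → ℝ} {q e s t : ℝ} (hfg : EqOn f g (Icc s t)) :
    gagliardoEnergy f q e s t = gagliardoEnergy g q e s t :=
  setLIntegral_congr_fun measurableSet_Icc fun x hx ↦
    setLIntegral_congr_fun measurableSet_Icc fun y hy ↦ by rw [hfg hx, hfg hy]

theorem rpow_abs_sub_le_mul_div (f : ℝ → ℝ) {q e x y L : ℝ} (hq : 0 < q) (he : 0 ≤ e)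
    (hxy : |x - y| ≤ L) : |f x - f y| ^ q ≤ L ^ e * (|f x - f y| ^ q / |x - y| ^ e) := by
  rcases eq_or_ne x y with rfl | hne
  · simp [Real.zero_rpow hq.ne']
  have hpos : 0 < |x - y| ^ e := Real.rpow_pos_of_pos (abs_pos.2 (sub_ne_zero.2 hne)) e
  rw [mul_div_left_comm]
  refine le_mul_of_one_le_right (by positivity) ?_
  rw [one_le_div hpos]
  exact Real.rpow_le_rpow (abs_nonneg _) hxy he

theorem setLIntegral_setLIntegral_enorm_sub_rpow_le (g : ℝ → ℝ) {q e : ℝ} (hq : 0 < q)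
    (he : 0 ≤ e) {a b c d s t : ℝ} (hsub : Icc c d ⊆ Icc a b) (hst : Icc a b ⊆ Icc s t) :
    ∫⁻ x in Icc a b, ∫⁻ y in Icc c d, ‖g x - g y‖ₑ ^ q ≤
      ENNReal.ofReal ((b - a) ^ e) * gagliardoEnergy g q e s t := by
  have hpt : ∀ x ∈ Icc a b, ∀ y ∈ Icc c d, ‖g x - g y‖ₑ ^ q ≤
      ENNReal.ofReal ((b - a) ^ e) * ENNReal.ofReal (|g x - g y| ^ q / |x - y| ^ e) := by
    intro x hx y hy
    obtain ⟨hy₁, hy₂⟩ := hsub hy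
    rw [Real.enorm_eq_ofReal_abs, ENNReal.ofReal_rpow_of_nonneg (abs_nonneg _) hq.le,
      ← ENNReal.ofReal_mul' (by positivity)]
    exact ENNReal.ofReal_le_ofReal
      (rpow_abs_sub_le_mul_div g hq he (abs_le.2 ⟨by linarith [hx.1], by linarith [hx.2]⟩))
  calc ∫⁻ x in Icc a b, ∫⁻ y in Icc c d, ‖g x - g y‖ₑ ^ q
      ≤ ∫⁻ x in Icc a b, ∫⁻ y in Icc s t,
          ENNReal.ofReal ((b - a) ^ e) * ENNReal.ofReal (|g x - g y| ^ q / |x - y| ^ e) :=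
        setLIntegral_mono' measurableSet_Icc fun x hx ↦
          (setLIntegral_mono' measurableSet_Icc (hpt x hx)).trans
            (lintegral_mono_set (hsub.trans hst))
    _ ≤ ∫⁻ x in Icc s t, ∫⁻ y in Icc s t,
          ENNReal.ofReal ((b - a) ^ e) * ENNReal.ofReal (|g x - g y| ^ q / |x - y| ^ e) :=
        lintegral_mono_set hst
    _ = ENNReal.ofReal ((b - a) ^ e) * gagliardoEnergy g q e s t := by
        simp_rw [lintegral_const_mul' _ _ ENNReal.ofReal_ne_top]
        rfl

theorem enorm_setAverage_sub_setAverage_le {g : ℝ → ℝ} (hg : Continuous g) {q e : ℝ}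
    (hq : 1 ≤ q) (he : 0 ≤ e) {a b c d s t : ℝ} (hab : a < b) (hcd : c < d)
    (hsub : Icc c d ⊆ Icc a b) (hst : Icc a b ⊆ Icc s t) :
    ‖(⨍ x in Icc a b, g x) - ⨍ y in Icc c d, g y‖ₑ ≤
      (ENNReal.ofReal ((b - a) ^ e / ((b - a) * (d - c))) * gagliardoEnergy g q e s t) ^
        (1 / q) := by
  have : NeZero ((volume : Measure ℝ).restrict (Icc a b)) :=
    ⟨by simp [Measure.restrict_eq_zero, hab]⟩
  have : NeZero ((volume : Measure ℝ).restrict (Icc c d)) :=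
    ⟨by simp [Measure.restrict_eq_zero, hcd]⟩
  refine (enorm_average_sub_average_le (hg.integrableOn_Icc (μ := volume) (a := a) (b := b))
    (hg.integrableOn_Icc (μ := volume) (a := c) (b := d)) hq).trans ?_
  gcongr
  simp_rw [setLAverage_eq', lintegral_smul_measure, smul_eq_mul, Real.volume_Icc,
    lintegral_const_mul' _ _ (ENNReal.inv_ne_top.2 (ENNReal.ofReal_pos.2 (sub_pos.2 hcd)).ne')]
  calc (ENNReal.ofReal (b - a))⁻¹ * ((ENNReal.ofReal (d - c))⁻¹ *
        ∫⁻ x in Icc a b, ∫⁻ y in Icc c d, ‖g x - g y‖ₑ ^ q)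
      ≤ (ENNReal.ofReal (b - a))⁻¹ * ((ENNReal.ofReal (d - c))⁻¹ *
        (ENNReal.ofReal ((b - a) ^ e) * gagliardoEnergy g q e s t)) := by
        gcongr
        exact setLIntegral_setLIntegral_enorm_sub_rpow_le g (by linarith) he hsub hst
    _ = _ := by
      rw [ENNReal.ofReal_div_of_pos (by nlinarith), ENNReal.ofReal_mul (by linarith),
        ENNReal.div_eq_inv_mul, ENNReal.mul_inv (by simp) (by simp)]
      ring

theorem rpow_div_mul_half_mul_rpow {ℓ q α r : ℝ} (hℓ : 0 < ℓ) (hq : 0 < q) (hr : 0 ≤ r) :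
    (ℓ ^ (1 + q * α) / (ℓ * (ℓ / 2)) * r) ^ (1 / q) = (2 * r) ^ (1 / q) * ℓ ^ (α - 1 / q) := by
  have hsplit : ℓ ^ (1 + q * α) / (ℓ * (ℓ / 2)) * r = 2 * r * ℓ ^ (q * α - 1) := by
    rw [Real.rpow_sub_one hℓ.ne', Real.rpow_add hℓ, Real.rpow_one]
    field_simp
  rw [hsplit, Real.mul_rpow (by positivity) (by positivity), ← Real.rpow_mul hℓ.le]
  congr 2
  field_simp

theorem abs_setAverage_sub_setAverage_half_le {g : ℝ → ℝ} (hg : Continuous g) {q α : ℝ}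
    (hq : 1 ≤ q) (he : 0 ≤ 1 + q * α) {a b c d s t : ℝ} (hab : a < b)
    (hsub : Icc c d ⊆ Icc a b) (hst : Icc a b ⊆ Icc s t) (hlen : d - c = (b - a) / 2)
    (hE : gagliardoEnergy g q (1 + q * α) s t ≠ ⊤) :
    |(⨍ x in Icc a b, g x) - ⨍ y in Icc c d, g y| ≤
      (2 * (gagliardoEnergy g q (1 + q * α) s t).toReal) ^ (1 / q) * (b - a) ^ (α - 1 / q) := by
  have h := enorm_setAverage_sub_setAverage_le hg hq he hab (by linarith) hsub hst
  rw [hlen, ← ENNReal.ofReal_toReal hE, ← ENNReal.ofReal_mul (by have := hab.le; positivity),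
    ENNReal.ofReal_rpow_of_nonneg (by have := hab.le; positivity) (by positivity),
    Real.enorm_eq_ofReal_abs, ENNReal.ofReal_le_ofReal_iff (by positivity)] at h
  rwa [rpow_div_mul_half_mul_rpow (sub_pos.2 hab) (by linarith) ENNReal.toReal_nonneg] at h

theorem tendsto_setAverage_Icc {g : ℝ → ℝ} (hg : Continuous g) {w : ℝ} {a b : ℕ → ℝ}
    (hab : ∀ n, a n < b n) (hw : ∀ n, w ∈ Icc (a n) (b n))
    (hlen : Tendsto (fun n ↦ b n - a n) atTop (𝓝 0)) :
    Tendsto (fun n ↦ ⨍ x in Icc (a n) (b n), g x) atTop (𝓝 (g w)) := by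
  choose c hc hgc using fun n ↦ exists_eq_setAverage (μ := volume)
    (isConnected_Icc (hab n).le) hg.continuousOn hg.integrableOn_Icc (by simp) (by simp [hab n])
  have hcw : Tendsto c atTop (𝓝 w) := by
    refine tendsto_iff_norm_sub_tendsto_zero.2
      (squeeze_zero (fun _ ↦ norm_nonneg _) (fun n ↦ ?_) hlen)
    rw [Real.norm_eq_abs, abs_le]
    constructor <;> linarith [(hc n).1, (hc n).2, (hw n).1, (hw n).2]
  exact ((hg.tendsto w).comp hcw).congr hgc

theorem rpow_div_two_pow {d : ℝ} (hd : 0 ≤ d) (β : ℝ) (n : ℕ) :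
    (d / 2 ^ n) ^ β = d ^ β * ((2 : ℝ) ^ β)⁻¹ ^ n := by
  rw [Real.div_rpow hd (by positivity), ← Real.rpow_natCast, ← Real.rpow_mul zero_le_two,
    mul_comm, Real.rpow_mul zero_le_two, Real.rpow_natCast, inv_pow, div_eq_mul_inv]

theorem inv_two_rpow_lt_one {β : ℝ} (hβ : 0 < β) : ((2 : ℝ) ^ β)⁻¹ < 1 :=
  inv_lt_one_of_one_lt₀ (Real.one_lt_rpow one_lt_two hβ)

theorem dist_setAverage_le_of_halving {g : ℝ → ℝ} (hg : Continuous g) {q α : ℝ} (hq : 1 ≤ q)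
    (hα : 1 / q < α) {s t ℓ w : ℝ} {a b : ℕ → ℝ} (hℓ : 0 < ℓ)
    (hlen : ∀ n, b n - a n = ℓ / 2 ^ n)
    (hnest : ∀ n, Icc (a (n + 1)) (b (n + 1)) ⊆ Icc (a n) (b n))
    (hw : ∀ n, w ∈ Icc (a n) (b n)) (hst : Icc (a 0) (b 0) ⊆ Icc s t)
    (hE : gagliardoEnergy g q (1 + q * α) s t ≠ ⊤) :
    dist (⨍ x in Icc (a 0) (b 0), g x) (g w) ≤
      (2 * (gagliardoEnergy g q (1 + q * α) s t).toReal) ^ (1 / q) * ℓ ^ (α - 1 / q) /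
        (1 - ((2 : ℝ) ^ (α - 1 / q))⁻¹) := by
  have he : 0 ≤ 1 + q * α := by
    have := (div_lt_iff₀' (by linarith : 0 < q)).1 hα
    linarith
  have hab : ∀ n, a n < b n := fun n ↦ sub_pos.1 (by rw [hlen]; positivity)
  refine dist_le_of_le_geometric_of_tendsto₀ (f := fun n ↦ ⨍ x in Icc (a n) (b n), g x) _ _
    (inv_two_rpow_lt_one (sub_pos.2 hα)) (fun n ↦ ?_) (tendsto_setAverage_Icc hg hab hw ?_)
  · have h := abs_setAverage_sub_setAverage_half_le hg hq he (hab n) (hnest n)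
      ((antitone_nat_of_succ_le (f := fun n ↦ Icc (a n) (b n)) hnest (Nat.zero_le n)).trans hst)
      (by rw [hlen, hlen, pow_succ, div_div]) hE
    rwa [hlen, rpow_div_two_pow hℓ.le, ← mul_assoc, ← Real.dist_eq] at h
  · simp_rw [hlen]
    exact tendsto_const_nhds.div_atTop (tendsto_pow_atTop_atTop_of_one_lt one_lt_two)

theorem abs_sub_le_of_gagliardoEnergy_ne_top {g : ℝ → ℝ} (hg : Continuous g) {q α : ℝ}
    (hq : 1 ≤ q) (hα : 1 / q < α) {s t u v : ℝ} (hsu : s ≤ u) (huv : u < v) (hvt : v ≤ t)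
    (hE : gagliardoEnergy g q (1 + q * α) s t ≠ ⊤) :
    |g u - g v| ≤ 2 / (1 - ((2 : ℝ) ^ (α - 1 / q))⁻¹) *
      ((2 * (gagliardoEnergy g q (1 + q * α) s t).toReal) ^ (1 / q) * (v - u) ^ (α - 1 / q)) := by
  have hℓ : ∀ n : ℕ, 0 < (v - u) / 2 ^ n := fun n ↦ div_pos (sub_pos.2 huv) (by positivity)
  have hhalf : ∀ n : ℕ, (v - u) / 2 ^ (n + 1) ≤ (v - u) / 2 ^ n := fun n ↦ by
    rw [pow_succ, ← div_div]
    exact half_le_self (hℓ n).le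
  have hleft := dist_setAverage_le_of_halving (a := fun _ ↦ u) (b := fun n ↦ u + (v - u) / 2 ^ n)
    hg hq hα (sub_pos.2 huv) (fun _ ↦ add_sub_cancel_left _ _)
    (fun n ↦ Icc_subset_Icc le_rfl (by linarith [hhalf n])) (fun n ↦ ⟨le_rfl, by linarith [hℓ n]⟩)
    (Icc_subset_Icc hsu (by simpa using hvt)) hE
  have hright := dist_setAverage_le_of_halving (a := fun n ↦ v - (v - u) / 2 ^ n) (b := fun _ ↦ v)
    hg hq hα (sub_pos.2 huv) (fun _ ↦ sub_sub_cancel _ _)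
    (fun n ↦ Icc_subset_Icc (by linarith [hhalf n]) le_rfl) (fun n ↦ ⟨by linarith [hℓ n], le_rfl⟩)
    (Icc_subset_Icc (by simpa using hsu) hvt) hE
  simp only [pow_zero, div_one, add_sub_cancel, sub_sub_cancel] at hleft hright
  calc |g u - g v| = dist (g u) (g v) := (Real.dist_eq _ _).symm
    _ ≤ dist (⨍ x in Icc u v, g x) (g u) + dist (⨍ x in Icc u v, g x) (g v) :=
      dist_triangle_left _ _ _
    _ ≤ _ := add_le_add hleft hright
    _ = _ := by ring

noncomputable def grrConstant (q α : ℝ) : ℝ := 2 * (2 / (1 - ((2 : ℝ) ^ (α - 1 / q))⁻¹)) ^ q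

theorem grrConstant_pos {q α : ℝ} (hα : 1 / q < α) : 0 < grrConstant q α :=
  mul_pos two_pos (Real.rpow_pos_of_pos
    (div_pos two_pos (sub_pos.2 (inv_two_rpow_lt_one (sub_pos.2 hα)))) _)

theorem ofReal_rpow_le_mul_gagliardoEnergy {g : ℝ → ℝ} (hg : Continuous g) {q α : ℝ}
    (hq : 1 ≤ q) (hα : 1 / q < α) {s t u v : ℝ} (hsu : s ≤ u) (huv : u < v) (hvt : v ≤ t) :
    ENNReal.ofReal ((|g u - g v| / |u - v| ^ (α - 1 / q)) ^ q) ≤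
      ENNReal.ofReal (grrConstant q α) * gagliardoEnergy g q (1 + q * α) s t := by
  rcases eq_or_ne (gagliardoEnergy g q (1 + q * α) s t) ⊤ with hE | hE
  · rw [hE, ENNReal.mul_top (ENNReal.ofReal_pos.2 (grrConstant_pos hα)).ne']
    exact le_top
  have hK : 0 < 2 / (1 - ((2 : ℝ) ^ (α - 1 / q))⁻¹) :=
    div_pos two_pos (sub_pos.2 (inv_two_rpow_lt_one (sub_pos.2 hα)))
  have h := abs_sub_le_of_gagliardoEnergy_ne_top hg hq hα hsu huv hvt hE
  rw [← ENNReal.ofReal_toReal hE, ← ENNReal.ofReal_mul (grrConstant_pos hα).le]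
  refine ENNReal.ofReal_le_ofReal ?_
  rw [abs_sub_comm u, abs_of_pos (sub_pos.2 huv)]
  calc (|g u - g v| / (v - u) ^ (α - 1 / q)) ^ q
      ≤ (2 / (1 - ((2 : ℝ) ^ (α - 1 / q))⁻¹) *
          (2 * (gagliardoEnergy g q (1 + q * α) s t).toReal) ^ (1 / q)) ^ q := by
        gcongr
        rw [div_le_iff₀ (Real.rpow_pos_of_pos (sub_pos.2 huv) _), mul_assoc]
        exact h
    _ = _ := by
        rw [grrConstant, Real.mul_rpow hK.le (by positivity), ← Real.rpow_mul (by positivity),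
          one_div_mul_cancel (by linarith), Real.rpow_one]
        ring

/-- **Garsia–Rodemich–Rumsey inequality:** for `q > 1`, `α ∈ (1/q, 1)` and `f` continuous on
`[0,∞)`, the `(α - 1/q)`-Hölder seminorm of `f` on `[s,t]` satisfies
`(sup_{u ≠ v} |f(u)-f(v)|/|u-v|^{α-1/q})^q ≤ c_{α,q} ∫_s^t ∫_s^t |f(u)-f(v)|^q / |u-v|^{1+qα} du dv`
(stated pointwise in `u ≠ v`; the right-hand side may be infinite). -/
theorem stmt11 (q α : ℝ) (hq : 1 < q) (hα : α ∈ Set.Ioo (1 / q) 1) :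
    ∃ c : ℝ, 0 < c ∧ ∀ f : ℝ → ℝ, ContinuousOn f (Set.Ici (0 : ℝ)) →
      ∀ s t : ℝ, 0 ≤ s → s < t →
        ∀ u ∈ Set.Icc s t, ∀ v ∈ Set.Icc s t, u ≠ v →
          ENNReal.ofReal ((|f u - f v| / |u - v| ^ (α - 1 / q)) ^ q)
            ≤ ENNReal.ofReal c *
              ∫⁻ x in Set.Icc s t, ∫⁻ y in Set.Icc s t,
                ENNReal.ofReal (|f x - f y| ^ q / |x - y| ^ (1 + q * α)) := by
  refine ⟨grrConstant q α, grrConstant_pos hα.1, fun f hf s t hs hst u hu v hv huv ↦ ?_⟩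
  obtain ⟨g, hg, hfg⟩ :=
    (hf.mono (Icc_subset_Ici_self.trans (Ici_subset_Ici.2 hs))).exists_continuous_eqOn_Icc hst.le
  change _ ≤ _ * gagliardoEnergy f q (1 + q * α) s t
  rw [hfg hu, hfg hv, gagliardoEnergy_congr hfg]
  rcases huv.lt_or_gt with h | h
  · exact ofReal_rpow_le_mul_gagliardoEnergy hg hq.le hα.1 hu.1 h hv.2
  · rw [abs_sub_comm (g u), abs_sub_comm u]
    exact ofReal_rpow_le_mul_gagliardoEnergy hg hq.le hα.1 hv.1 h hu.2
end
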